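/- arXiv:math/0109124 — 6 statements merged into one kernel-verified Lean document; each statement's English description precedes it below -/
import Mathlib

section
/- Let z0 ∈ ℂ, W0 = (w0^1,…,w0^N) ∈ ℂ^N, and let a, b^1, …, b^N be positive reals. Let F be a ℂ^N-valued map, holomorphic on an open neighbourhood of the closed polydisc Δ = {(W,z) ∈ ℂ^N × ℂ : |w^j − w0^j| ≤ b^j for j = 1,…,N, |z − z0| ≤ a}. Assume (A) ‖F(W,z)‖ ≤ M for all (W,z) ∈ Δ, and (B) ‖F(U,z) − F(V,z)‖ ≤ K·‖U − V‖ for all (U,z),(V,z) ∈ Δ. Then for every r with 0 < r < min(a, b^1/M, …, b^N/M, 1/K) there exists a holomorphic map W : D(z0,r) → ℂ^N with W(z0) = W0, (W(z),z) ∈ Δ for all z ∈ D(z0,r), and W′(z) = F(W(z),z) for all z ∈ D(z0,r); moreover W is unique: any two holomorphic maps on D(z0,r) with these properties coincide. -/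
/-!
Picard iteration on the cylinder `closedBall W0 (M r) × D(z0, r)`, which lies in `Δ`. The next
iterate is the primitive of `z ↦ F (W z) z` on the disc taking the value `W0` at `z0`; since
`‖F‖ ≤ M` it stays in the cylinder, and by the mean value inequality successive differences shrink
by the factor `K r < 1`. So the iterates converge uniformly, together with their derivatives, to a
solution. For uniqueness, the difference `D` of two solutions has `‖D'‖ ≤ K ‖D‖`, so the maximum
`m` of `‖D‖` on a closed disc of radius `r' < r` satisfies `m ≤ K r' m`, hence `m = 0`.
-/

open Metric Set Filter Topology

theorem tendstoUniformlyOn_of_forall_dist_le {ι α β : Type*} [PseudoMetricSpace β] {l : Filter ι}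
    {f : ι → α → β} {g : α → β} {s : Set α} {u : ι → ℝ} (hu : Tendsto u l (𝓝 0))
    (hfg : ∀ n, ∀ x ∈ s, dist (g x) (f n x) ≤ u n) : TendstoUniformlyOn f g l s :=
  Metric.tendstoUniformlyOn_iff.2 fun _ hε =>
    (hu.eventually (gt_mem_nhds hε)).mono fun n hn x hx => (hfg n x hx).trans_lt hn

section

variable {E : Type*} [NormedAddCommGroup E] [NormedSpace ℂ E]

theorem eqOn_zero_of_norm_deriv_le_mul_norm {D D' : ℂ → E} {z0 : ℂ} {r K : ℝ} (hK : 0 ≤ K)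
    (hKr : K * r < 1) (hD : ∀ z ∈ ball z0 r, HasDerivAt D (D' z) z)
    (hD' : ∀ z ∈ ball z0 r, ‖D' z‖ ≤ K * ‖D z‖) (hD0 : D z0 = 0) : EqOn D 0 (ball z0 r) := by
  intro z hz
  obtain ⟨r', hzr', hr'r⟩ := exists_between (mem_ball_iff_norm.1 hz)
  have hsub : closedBall z0 r' ⊆ ball z0 r := closedBall_subset_ball hr'r
  have hz0 : z0 ∈ closedBall z0 r' := mem_closedBall_self ((norm_nonneg _).trans hzr'.le)
  obtain ⟨y, hy, hmax⟩ := (isCompact_closedBall z0 r').exists_isMaxOn ⟨z0, hz0⟩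
    (fun w hw => (hD w (hsub hw)).continuousAt.norm.continuousWithinAt)
  have hmv : ‖D y - D z0‖ ≤ K * ‖D y‖ * ‖y - z0‖ :=
    (convex_closedBall z0 r').norm_image_sub_le_of_norm_hasDerivWithin_le
      (fun w hw => (hD w (hsub hw)).hasDerivWithinAt)
      (fun w hw => (hD' w (hsub hw)).trans (mul_le_mul_of_nonneg_left (hmax hw) hK)) hz0 hy
  have hy0 : ‖D y‖ ≤ 0 := by
    rw [hD0, sub_zero] at hmv
    have hKr' : K * r' < 1 := (mul_le_mul_of_nonneg_left hr'r.le hK).trans_lt hKr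
    nlinarith [mem_closedBall_iff_norm.1 hy, norm_nonneg (D y), mul_nonneg hK (norm_nonneg (D y))]
  exact norm_le_zero_iff.1 ((hmax (mem_closedBall_iff_norm.2 hzr'.le)).trans hy0)

variable {F : E → ℂ → E} {x0 : E} {z0 : ℂ} {r R M K : ℝ}

structure IsPicardSeq (F : E → ℂ → E) (x0 : E) (z0 : ℂ) (r R : ℝ) (W : ℕ → ℂ → E) : Prop where
  zero : W 0 = fun _ => x0
  apply_center : ∀ n, W n z0 = x0
  mapsTo : ∀ n, MapsTo (W n) (ball z0 r) (closedBall x0 R)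
  hasDerivAt_succ : ∀ n, ∀ z ∈ ball z0 r, HasDerivAt (W (n + 1)) (F (W n z) z) z

namespace IsPicardSeq

variable {W : ℕ → ℂ → E} (hW : IsPicardSeq F x0 z0 r R W) (hK : 0 ≤ K)
  (hFK : ∀ z ∈ ball z0 r, ∀ U ∈ closedBall x0 R, ∀ V ∈ closedBall x0 R,
    ‖F U z - F V z‖ ≤ K * ‖U - V‖)
include hW hK hFK

theorem dist_succ_le (n : ℕ) : ∀ z ∈ ball z0 r, dist (W n z) (W (n + 1) z) ≤ R * (K * r) ^ n := by
  induction n with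
  | zero =>
    intro z hz
    simpa [hW.zero, dist_comm] using hW.mapsTo 1 hz
  | succ n ih =>
    intro z hz
    have hmv : ‖(W (n + 2) z - W (n + 1) z) - (W (n + 2) z0 - W (n + 1) z0)‖ ≤
        K * (R * (K * r) ^ n) * ‖z - z0‖ :=
      (convex_ball z0 r).norm_image_sub_le_of_norm_hasDerivWithin_le
        (fun w hw => ((hW.hasDerivAt_succ (n + 1) w hw).sub
          (hW.hasDerivAt_succ n w hw)).hasDerivWithinAt)
        (fun w hw => (hFK w hw _ (hW.mapsTo _ hw) _ (hW.mapsTo _ hw)).trans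
          (mul_le_mul_of_nonneg_left ((dist_eq_norm' _ _).symm.le.trans (ih w hw)) hK))
        (mem_ball_self ((norm_nonneg _).trans_lt (mem_ball_iff_norm.1 hz))) hz
    rw [hW.apply_center, hW.apply_center, sub_self, sub_zero] at hmv
    have hC : 0 ≤ R * (K * r) ^ n := dist_nonneg.trans (ih z hz)
    calc dist (W (n + 1) z) (W (n + 1 + 1) z) = ‖W (n + 2) z - W (n + 1) z‖ := dist_eq_norm' _ _
      _ ≤ K * (R * (K * r) ^ n) * ‖z - z0‖ := hmv
      _ ≤ K * (R * (K * r) ^ n) * r :=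
        mul_le_mul_of_nonneg_left (mem_ball_iff_norm.1 hz).le (mul_nonneg hK hC)
      _ = R * (K * r) ^ (n + 1) := by ring

variable [CompleteSpace E] (hKr : K * r < 1)
include hKr

theorem tendsto_limUnder {z : ℂ} (hz : z ∈ ball z0 r) :
    Tendsto (fun n => W n z) atTop (𝓝 (limUnder atTop fun n => W n z)) :=
  tendsto_nhds_limUnder (cauchySeq_tendsto_of_complete
    (cauchySeq_of_le_geometric _ _ hKr fun n => hW.dist_succ_le hK hFK n z hz))

theorem dist_limUnder_le {z : ℂ} (hz : z ∈ ball z0 r) (n : ℕ) :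
    dist (W n z) (limUnder atTop fun n => W n z) ≤ R * (K * r) ^ n / (1 - K * r) :=
  dist_le_of_le_geometric_of_tendsto _ _ hKr (fun n => hW.dist_succ_le hK hFK n z hz)
    (hW.tendsto_limUnder hK hFK hKr hz) n

end IsPicardSeq

section Existence

variable [CompleteSpace E]

theorem exists_picard_step
    (hF : DifferentiableOn ℂ (fun p : E × ℂ => F p.1 p.2) (closedBall x0 (M * r) ×ˢ ball z0 r))
    (hFM : ∀ p ∈ closedBall x0 (M * r) ×ˢ ball z0 r, ‖F p.1 p.2‖ ≤ M) (hM : 0 ≤ M)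
    {W : ℂ → E} (hW : DifferentiableOn ℂ W (ball z0 r))
    (hWmaps : MapsTo W (ball z0 r) (closedBall x0 (M * r))) :
    ∃ V : ℂ → E, V z0 = x0 ∧ MapsTo V (ball z0 r) (closedBall x0 (M * r)) ∧
      ∀ z ∈ ball z0 r, HasDerivAt V (F (W z) z) z := by
  have hgraph : MapsTo (fun z => (W z, z)) (ball z0 r) (closedBall x0 (M * r) ×ˢ ball z0 r) :=
    fun z hz => ⟨hWmaps hz, hz⟩
  obtain ⟨V, hV0, hV⟩ :=
    ((hF.comp (hW.prodMk differentiableOn_id) hgraph).isExactOn_ball).with_val_at z0 x0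
  refine ⟨V, hV0, fun z hz => ?_, hV⟩
  have hmv : ‖V z - V z0‖ ≤ M * ‖z - z0‖ :=
    (convex_ball z0 r).norm_image_sub_le_of_norm_hasDerivWithin_le
      (fun w hw => (hV w hw).hasDerivWithinAt) (fun w hw => hFM _ (hgraph hw))
      (mem_ball_self ((norm_nonneg _).trans_lt (mem_ball_iff_norm.1 hz))) hz
  rw [hV0] at hmv
  exact mem_closedBall_iff_norm.2
    (hmv.trans (mul_le_mul_of_nonneg_left (mem_ball_iff_norm.1 hz).le hM))

theorem exists_isPicardSeq
    (hF : DifferentiableOn ℂ (fun p : E × ℂ => F p.1 p.2) (closedBall x0 (M * r) ×ˢ ball z0 r))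
    (hFM : ∀ p ∈ closedBall x0 (M * r) ×ˢ ball z0 r, ‖F p.1 p.2‖ ≤ M) (hM : 0 ≤ M) (hr : 0 ≤ r) :
    ∃ W, IsPicardSeq F x0 z0 r (M * r) W := by
  let Approx := {W : ℂ → E // W z0 = x0 ∧ MapsTo W (ball z0 r) (closedBall x0 (M * r)) ∧
    DifferentiableOn ℂ W (ball z0 r)}
  have step : ∀ W : Approx, ∃ V : Approx, ∀ z ∈ ball z0 r, HasDerivAt V.1 (F (W.1 z) z) z := by
    rintro ⟨W, -, hWmaps, hW⟩
    obtain ⟨V, hV0, hVmaps, hV⟩ := exists_picard_step hF hFM hM hW hWmaps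
    exact ⟨⟨V, hV0, hVmaps, fun z hz => (hV z hz).differentiableAt.differentiableWithinAt⟩, hV⟩
  choose T hT using step
  let W₀ : Approx := ⟨fun _ => x0, rfl,
    fun _ _ => mem_closedBall_self (mul_nonneg hM hr), differentiableOn_const x0⟩
  refine ⟨fun n => (T^[n] W₀).1, rfl, fun n => (T^[n] W₀).2.1, fun n => (T^[n] W₀).2.2.1,
    fun n z hz => ?_⟩
  rw [Function.iterate_succ_apply']
  exact hT _ z hz

theorem exists_eq_forall_mem_ball_hasDerivAt
    (hF : DifferentiableOn ℂ (fun p : E × ℂ => F p.1 p.2) (closedBall x0 (M * r) ×ˢ ball z0 r))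
    (hFM : ∀ p ∈ closedBall x0 (M * r) ×ˢ ball z0 r, ‖F p.1 p.2‖ ≤ M)
    (hFK : ∀ z ∈ ball z0 r, ∀ U ∈ closedBall x0 (M * r), ∀ V ∈ closedBall x0 (M * r),
      ‖F U z - F V z‖ ≤ K * ‖U - V‖)
    (hM : 0 ≤ M) (hK : 0 ≤ K) (hr : 0 ≤ r) (hKr : K * r < 1) :
    ∃ W : ℂ → E, W z0 = x0 ∧ MapsTo W (ball z0 r) (closedBall x0 (M * r)) ∧
      ∀ z ∈ ball z0 r, HasDerivAt W (F (W z) z) z := by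
  obtain ⟨W, hW⟩ := exists_isPicardSeq hF hFM hM hr
  set Wlim : ℂ → E := fun z => limUnder atTop fun n => W n z
  have hlim : ∀ z ∈ ball z0 r, Tendsto (fun n => W n z) atTop (𝓝 (Wlim z)) :=
    fun z hz => hW.tendsto_limUnder hK hFK hKr hz
  have hmaps : MapsTo Wlim (ball z0 r) (closedBall x0 (M * r)) := fun z hz =>
    isClosed_closedBall.mem_of_tendsto (hlim z hz) (Eventually.of_forall fun n => hW.mapsTo n hz)
  have hu : Tendsto (fun n : ℕ => M * r * (K * r) ^ n / (1 - K * r)) atTop (𝓝 0) := by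
    simpa using ((tendsto_pow_atTop_nhds_zero_of_lt_one (mul_nonneg hK hr) hKr).const_mul
      (M * r)).div_const (1 - K * r)
  have hderiv : TendstoUniformlyOn (fun n z => F (W n z) z) (fun z => F (Wlim z) z) atTop
      (ball z0 r) := by
    refine tendstoUniformlyOn_of_forall_dist_le (by simpa using hu.const_mul K) fun n z hz => ?_
    rw [dist_eq_norm]
    exact (hFK z hz _ (hmaps hz) _ (hW.mapsTo n hz)).trans (mul_le_mul_of_nonneg_left
      ((dist_eq_norm' _ _).symm.le.trans (hW.dist_limUnder_le hK hFK hKr hz n)) hK)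
  refine ⟨Wlim, ?_, hmaps, fun z hz => ?_⟩
  · simp only [Wlim, hW.apply_center]
    exact tendsto_const_nhds.limUnder_eq
  · exact hasDerivAt_of_tendstoUniformlyOn (g' := fun z => F (Wlim z) z) isOpen_ball hderiv
      (Eventually.of_forall hW.hasDerivAt_succ)
      (fun z hz => (hlim z hz).comp (tendsto_add_atTop_nat 1)) hz

end Existence

end

theorem stmt_0_general {N : ℕ} (z0 : ℂ) (W0 : Fin N → ℂ) (a : ℝ) (b : Fin N → ℝ)
    (hb : ∀ j, 0 < b j)
    (F : (Fin N → ℂ) → ℂ → (Fin N → ℂ)) (M K : ℝ)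
    (Δ : Set ((Fin N → ℂ) × ℂ))
    (hΔ : Δ = {p : (Fin N → ℂ) × ℂ |
      (∀ j, ‖p.1 j - W0 j‖ ≤ b j) ∧ ‖p.2 - z0‖ ≤ a})
    (hol : ∃ O : Set ((Fin N → ℂ) × ℂ), IsOpen O ∧ Δ ⊆ O ∧
      DifferentiableOn ℂ (fun p => F p.1 p.2) O)
    (hA : ∀ p ∈ Δ, ‖F p.1 p.2‖ ≤ M)
    (hB : ∀ (U V : Fin N → ℂ) (z : ℂ), (U, z) ∈ Δ → (V, z) ∈ Δ →
      ‖F U z - F V z‖ ≤ K * ‖U - V‖)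
    (r : ℝ) (hr0 : 0 < r) (hra : r < a) (hrb : ∀ j, r < b j / M) (hrK : r < 1 / K) :
    (∃ W : ℂ → (Fin N → ℂ),
        W z0 = W0 ∧ (∀ z ∈ ball z0 r, ((W z, z) : (Fin N → ℂ) × ℂ) ∈ Δ) ∧
        (∀ z ∈ ball z0 r, HasDerivAt W (F (W z) z) z)) ∧
    (∀ W1 W2 : ℂ → (Fin N → ℂ),
        (W1 z0 = W0 ∧ (∀ z ∈ ball z0 r, ((W1 z, z) : (Fin N → ℂ) × ℂ) ∈ Δ) ∧
          (∀ z ∈ ball z0 r, HasDerivAt W1 (F (W1 z) z) z)) →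
        (W2 z0 = W0 ∧ (∀ z ∈ ball z0 r, ((W2 z, z) : (Fin N → ℂ) × ℂ) ∈ Δ) ∧
          (∀ z ∈ ball z0 r, HasDerivAt W2 (F (W2 z) z) z)) →
        EqOn W1 W2 (ball z0 r)) := by
  obtain ⟨O, -, hΔO, hF⟩ := hol
  have hK : 0 < K := one_div_pos.1 (hr0.trans hrK)
  have hKr : K * r < 1 := by linarith [(lt_div_iff₀ hK).1 hrK]
  -- `max M 0` rather than `M`: for `N = 0` nothing forces `0 ≤ M`
  have hMb : ∀ j, max M 0 * r < b j := fun j => by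
    rcases le_or_gt M 0 with hM | hM
    · simpa [max_eq_right hM] using hb j
    · simpa [max_eq_left hM.le, mul_comm] using (lt_div_iff₀ hM).1 (hrb j)
  have hcyl : closedBall W0 (max M 0 * r) ×ˢ ball z0 r ⊆ Δ := by
    rintro ⟨V, z⟩ ⟨hV, hz⟩
    rw [hΔ]
    refine ⟨fun j => ?_, (mem_ball_iff_norm.1 hz).le.trans hra.le⟩
    calc ‖V j - W0 j‖ ≤ ‖V - W0‖ := norm_le_pi_norm (V - W0) j
      _ ≤ b j := (mem_closedBall_iff_norm.1 hV).trans (hMb j).le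
  refine ⟨?_, fun W1 W2 ⟨h10, h1Δ, h1⟩ ⟨h20, h2Δ, h2⟩ z hz => ?_⟩
  · obtain ⟨W, hW0, hWmaps, hW⟩ := exists_eq_forall_mem_ball_hasDerivAt (hF.mono (hcyl.trans hΔO))
      (fun p hp => (hA p (hcyl hp)).trans (le_max_left M 0))
      (fun z hz U hU V hV => hB U V z (hcyl ⟨hU, hz⟩) (hcyl ⟨hV, hz⟩))
      (le_max_right M 0) hK.le hr0.le hKr
    exact ⟨W, hW0, fun z hz => hcyl ⟨hWmaps hz, hz⟩, hW⟩
  · refine sub_eq_zero.1 (eqOn_zero_of_norm_deriv_le_mul_norm hK.le hKr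
      (fun z hz => (h1 z hz).sub (h2 z hz)) (fun z hz => hB _ _ z (h1Δ z hz) (h2Δ z hz)) ?_ hz)
    simp [h10, h20]

/-- **Existence and uniqueness for the first order Cauchy problem in the complex domain.**
`ℂ^N` (modelled as `Fin N → ℂ`) carries the maximum coordinate norm (the sup norm of the
Pi type).  If `F` is holomorphic on an open neighbourhood of the closed polydisc `Δ`,
bounded by `M` there and Lipschitz in its first variable with constant `K`, then for every
`r` with `0 < r < min (a, bⁱ/M, 1/K)` there is a unique holomorphic solution of the Cauchy
problem `W' = F (W z) z`, `W z0 = W0` on the disc `D(z0, r)`, with graph inside `Δ`. -/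
theorem stmt_0 {N : ℕ} (z0 : ℂ) (W0 : Fin N → ℂ) (a : ℝ) (b : Fin N → ℝ)
    (ha : 0 < a) (hb : ∀ j, 0 < b j)
    (F : (Fin N → ℂ) → ℂ → (Fin N → ℂ)) (M K : ℝ)
    (Δ : Set ((Fin N → ℂ) × ℂ))
    (hΔ : Δ = {p : (Fin N → ℂ) × ℂ |
      (∀ j, ‖p.1 j - W0 j‖ ≤ b j) ∧ ‖p.2 - z0‖ ≤ a})
    (hol : ∃ O : Set ((Fin N → ℂ) × ℂ), IsOpen O ∧ Δ ⊆ O ∧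
      DifferentiableOn ℂ (fun p => F p.1 p.2) O)
    (hA : ∀ p ∈ Δ, ‖F p.1 p.2‖ ≤ M)
    (hB : ∀ (U V : Fin N → ℂ) (z : ℂ), (U, z) ∈ Δ → (V, z) ∈ Δ →
      ‖F U z - F V z‖ ≤ K * ‖U - V‖)
    (r : ℝ) (hr0 : 0 < r) (hra : r < a) (hrb : ∀ j, r < b j / M) (hrK : r < 1 / K) :
    (∃ W : ℂ → (Fin N → ℂ),
        W z0 = W0 ∧ (∀ z ∈ ball z0 r, ((W z, z) : (Fin N → ℂ) × ℂ) ∈ Δ) ∧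
        (∀ z ∈ ball z0 r, HasDerivAt W (F (W z) z) z)) ∧
    (∀ W1 W2 : ℂ → (Fin N → ℂ),
        (W1 z0 = W0 ∧ (∀ z ∈ ball z0 r, ((W1 z, z) : (Fin N → ℂ) × ℂ) ∈ Δ) ∧
          (∀ z ∈ ball z0 r, HasDerivAt W1 (F (W1 z) z) z)) →
        (W2 z0 = W0 ∧ (∀ z ∈ ball z0 r, ((W2 z, z) : (Fin N → ℂ) × ℂ) ∈ Δ) ∧
          (∀ z ∈ ball z0 r, HasDerivAt W2 (F (W2 z) z) z)) →
        EqOn W1 W2 (ball z0 r)) :=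
  stmt_0_general z0 W0 a b hb F M K Δ hΔ hol hA hB r hr0 hra hrb hrK
end

section
/- Let N ≥ 1, let (U0, v0) ∈ ℂ^N × ℂ, and let S be a ℂ^N-valued map holomorphic on an open neighbourhood of (U0, v0) which is uniformly Lipschitz-like at (U0, v0). Then there exists an open neighbourhood V of v0 and a holomorphic map U : V → ℂ^N with U(v0) = U0 and U′(v) = S(U(v), v) for all v ∈ V; moreover the solution germ is unique: if U1 and U2 are holomorphic maps on neighbourhoods of v0 with U1(v0) = U2(v0) = U0 and Ui′(v) = S(Ui(v), v) near v0 (i = 1,2), then U1 = U2 on some neighbourhood of v0. -/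
/-!
Existence is Picard iteration in complex time. For `f` with values near `U0`, the map
`v ↦ U0 + ∫_[v0, v] S (f z) z dz`, integrated along the radial segment, is a contraction for the
sup norm on a small disc and preserves holomorphy: a holomorphic function on a disc has a
primitive (Morera), so the segment integral differentiates back to the integrand, and
holomorphy survives uniform limits. Retracting `v` radially onto the closed disc first makes
the iteration act on the complete space `ℂ →ᵇ E`.

Uniqueness: restricted to a segment from `v0`, two solutions solve the same real ODE, which is
Lipschitz in the state, so they agree by Gronwall.
-/

open Set Filter Function Metric MeasureTheory intervalIntegral Topology
open scoped NNReal BoundedContinuousFunction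

section RadialRetraction

variable {F : Type*} [NormedAddCommGroup F] [NormedSpace ℝ F] {c x : F} {r : ℝ}

noncomputable def radialRetraction (c : F) (r : ℝ) (x : F) : F :=
  c + (r / max r ‖x - c‖) • (x - c)

theorem continuous_radialRetraction (hr : 0 < r) : Continuous (radialRetraction c r) := by
  unfold radialRetraction
  have : ∀ x : F, max r ‖x - c‖ ≠ 0 := fun x => (lt_max_of_lt_left hr).ne'
  fun_prop (disch := exact this _)

theorem radialRetraction_mem_closedBall (hr : 0 < r) (x : F) :
    radialRetraction c r x ∈ closedBall c r := by
  rw [mem_closedBall, dist_eq_norm, radialRetraction, add_sub_cancel_left, norm_smul,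
    Real.norm_eq_abs, abs_of_nonneg (by positivity), div_mul_eq_mul_div,
    div_le_iff₀ (lt_max_of_lt_left hr)]
  exact mul_le_mul_of_nonneg_left (le_max_right _ _) hr.le

theorem radialRetraction_of_mem (hr : 0 < r) (hx : x ∈ closedBall c r) :
    radialRetraction c r x = x := by
  rw [mem_closedBall, dist_eq_norm] at hx
  rw [radialRetraction, max_eq_left hx, div_self hr.ne', one_smul, add_sub_cancel]

end RadialRetraction

section

variable {E : Type*} [NormedAddCommGroup E] [NormedSpace ℂ E]

theorem HasDerivAt.comp_add_smul_sub {f : ℂ → E} {f' : E} {c z : ℂ} {t : ℝ}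
    (hf : HasDerivAt f f' (c + t • (z - c))) :
    HasDerivAt (fun s : ℝ => f (c + s • (z - c))) ((z - c) • f') t := by
  have hγ : HasDerivAt (fun s : ℝ => c + s • (z - c)) (z - c) t := by
    simpa using ((hasDerivAt_id t).smul_const (z - c)).const_add c
  exact hf.scomp t hγ

theorem BoundedContinuousFunction.isClosed_setOf_differentiableOn {U : Set ℂ} [CompleteSpace E]
    (hU : IsOpen U) : IsClosed {f : ℂ →ᵇ E | DifferentiableOn ℂ f U} := by
  refine IsSeqClosed.isClosed fun F f hF hlim => ?_
  exact ((tendsto_iff_tendstoUniformly.1 hlim).tendstoUniformlyOn.tendstoLocallyUniformlyOn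
    ).differentiableOn (.of_forall hF) hU

noncomputable def segmentIntegral (h : ℂ → E) (c z : ℂ) : E :=
  (z - c) • ∫ t in (0 : ℝ)..1, h (c + t • (z - c))

section SegmentIntegral

variable {h h₁ h₂ : ℂ → E} {c z : ℂ} {r ρ M : ℝ}

theorem add_smul_sub_mem_closedBall (hz : z ∈ closedBall c ρ) {t : ℝ} (ht : t ∈ Icc (0 : ℝ) 1) :
    c + t • (z - c) ∈ closedBall c ρ :=
  (convex_closedBall c ρ).add_smul_sub_mem (mem_closedBall_self (dist_nonneg.trans hz)) hz ht

theorem add_smul_sub_mem_ball (hz : z ∈ ball c r) {t : ℝ} (ht : t ∈ Icc (0 : ℝ) 1) :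
    c + t • (z - c) ∈ ball c r :=
  (convex_ball c r).add_smul_sub_mem (mem_ball_self (dist_nonneg.trans_lt hz)) hz ht

theorem norm_segmentIntegral_sub_le (h₁c : ContinuousOn h₁ (closedBall c ρ))
    (h₂c : ContinuousOn h₂ (closedBall c ρ)) (hM : ∀ w ∈ closedBall c ρ, ‖h₁ w - h₂ w‖ ≤ M)
    (hz : z ∈ closedBall c ρ) :
    ‖segmentIntegral h₁ c z - segmentIntegral h₂ c z‖ ≤ ρ * M := by
  have hseg : ∀ t ∈ uIcc (0 : ℝ) 1, c + t • (z - c) ∈ closedBall c ρ := fun t ht =>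
    add_smul_sub_mem_closedBall hz (by rwa [uIcc_of_le zero_le_one] at ht)
  have hint : ∀ h : ℂ → E, ContinuousOn h (closedBall c ρ) →
      IntervalIntegrable (fun t : ℝ => h (c + t • (z - c))) volume 0 1 := fun h hc =>
    (hc.comp (by fun_prop) hseg).intervalIntegrable
  have hI : ‖∫ t in (0 : ℝ)..1, (h₁ (c + t • (z - c)) - h₂ (c + t • (z - c)))‖ ≤ M := by
    simpa using norm_integral_le_of_norm_le_const fun t ht =>
      hM _ (hseg t (uIoc_subset_uIcc ht))
  rw [segmentIntegral, segmentIntegral, ← smul_sub, ← integral_sub (hint h₁ h₁c) (hint h₂ h₂c),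
    norm_smul]
  exact mul_le_mul (mem_closedBall_iff_norm.1 hz) hI (norm_nonneg _) (dist_nonneg.trans hz)

theorem continuous_segmentIntegral_radialRetraction (hr : 0 < r)
    (hh : ContinuousOn h (closedBall c r)) :
    Continuous fun v => segmentIntegral h c (radialRetraction c r v) := by
  have hπ := continuous_radialRetraction (c := c) hr
  -- clamping `t` makes the integrand continuous on all of `ℂ × ℝ`
  have hclamp : (fun v => segmentIntegral h c (radialRetraction c r v)) = fun v =>
      (radialRetraction c r v - c) • ∫ t in (0 : ℝ)..1,
        h (c + (projIcc 0 1 zero_le_one t : ℝ) • (radialRetraction c r v - c)) := by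
    ext v
    refine congrArg _ (integral_congr fun t ht => ?_)
    rw [uIcc_of_le zero_le_one] at ht
    simp only [projIcc_of_mem _ ht]
  have hseg : Continuous fun p : ℂ × ℝ =>
      c + (projIcc 0 1 zero_le_one p.2 : ℝ) • (radialRetraction c r p.1 - c) := by
    fun_prop
  rw [hclamp]
  exact (hπ.sub continuous_const).smul (continuous_parametric_intervalIntegral_of_continuous'
    (f := fun v t => h (c + (projIcc 0 1 zero_le_one t : ℝ) • (radialRetraction c r v - c)))
    (hh.comp_continuous hseg fun p => add_smul_sub_mem_closedBall
      (radialRetraction_mem_closedBall hr _) (projIcc 0 1 zero_le_one p.2).2) 0 1)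

variable [CompleteSpace E]

theorem hasDerivAt_segmentIntegral (hh : DifferentiableOn ℂ h (ball c r)) (hz : z ∈ ball c r) :
    HasDerivAt (segmentIntegral h c) (h z) z := by
  obtain ⟨g, hg⟩ := hh.isExactOn_ball
  have hprimitive : ∀ w ∈ ball c r, segmentIntegral h c w = g w - g c := by
    intro w hw
    have hseg : ∀ t ∈ uIcc (0 : ℝ) 1, c + t • (w - c) ∈ ball c r := fun t ht =>
      add_smul_sub_mem_ball hw (by rwa [uIcc_of_le zero_le_one] at ht)
    have hcont : ContinuousOn (fun t : ℝ => (w - c) • h (c + t • (w - c))) (uIcc 0 1) :=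
      continuousOn_const.smul (hh.continuousOn.comp (by fun_prop) hseg)
    rw [segmentIntegral, ← intervalIntegral.integral_smul, integral_eq_sub_of_hasDerivAt
      (fun t ht => (hg _ (hseg t ht)).comp_add_smul_sub) hcont.intervalIntegrable]
    simp
  exact ((hg z hz).sub_const (g c)).congr_of_eventuallyEq
    (eventually_of_mem (isOpen_ball.mem_nhds hz) hprimitive)

end SegmentIntegral

section Picard

variable {S : E → ℂ → E} {U0 : E} {v0 v : ℂ} {a r M D : ℝ} {K : ℝ≥0} {f g : ℂ → E}

/-- Complex-time analogue of `IsPicardLindelof`: `a` is the radius in the state, `r` in time. -/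
structure IsHolomorphicPicardLindelof (S : E → ℂ → E) (U0 : E) (v0 : ℂ) (a r M : ℝ) (K : ℝ≥0) :
    Prop where
  differentiableAt : ∀ p ∈ closedBall U0 a ×ˢ closedBall v0 r, DifferentiableAt ℂ (uncurry S) p
  norm_le : ∀ p ∈ closedBall U0 a ×ˢ closedBall v0 r, ‖uncurry S p‖ ≤ M
  lipschitzOnWith : ∀ v ∈ closedBall v0 r, LipschitzOnWith K (fun u => S u v) (closedBall U0 a)
  nonneg : 0 ≤ a
  pos : 0 < r
  mul_le : r * M ≤ a
  mul_lt_one : r * K < 1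

noncomputable def picardMap (S : E → ℂ → E) (U0 : E) (v0 : ℂ) (r : ℝ) (f : ℂ → E) (v : ℂ) : E :=
  U0 + segmentIntegral (fun z => S (f z) z) v0 (radialRetraction v0 r v)

@[simp]
theorem picardMap_center : picardMap S U0 v0 r f v0 = U0 := by
  simp [picardMap, radialRetraction, segmentIntegral]

namespace IsHolomorphicPicardLindelof

theorem continuousOn_comp_graph (hP : IsHolomorphicPicardLindelof S U0 v0 a r M K)
    (hf : Continuous f) (hfa : ∀ v, f v ∈ closedBall U0 a) :
    ContinuousOn (fun z => S (f z) z) (closedBall v0 r) := by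
  have hS : ContinuousOn (uncurry S) (closedBall U0 a ×ˢ closedBall v0 r) := fun p hp =>
    (hP.differentiableAt p hp).continuousAt.continuousWithinAt
  exact hS.comp (hf.prodMk continuous_id).continuousOn fun z hz => ⟨hfa z, hz⟩

theorem continuous_picardMap (hP : IsHolomorphicPicardLindelof S U0 v0 a r M K)
    (hf : Continuous f) (hfa : ∀ v, f v ∈ closedBall U0 a) :
    Continuous (picardMap S U0 v0 r f) :=
  continuous_const.add
    (continuous_segmentIntegral_radialRetraction hP.pos (hP.continuousOn_comp_graph hf hfa))

theorem picardMap_mem_closedBall (hP : IsHolomorphicPicardLindelof S U0 v0 a r M K)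
    (hf : Continuous f) (hfa : ∀ v, f v ∈ closedBall U0 a) (v : ℂ) :
    picardMap S U0 v0 r f v ∈ closedBall U0 a := by
  have hseg := norm_segmentIntegral_sub_le (h₂ := fun _ => 0) (hP.continuousOn_comp_graph hf hfa)
    continuousOn_const
    (fun w hw => by simpa using hP.norm_le (f w, w) ⟨hfa w, hw⟩)
    (radialRetraction_mem_closedBall hP.pos v)
  rw [mem_closedBall_iff_norm, picardMap, add_sub_cancel_left]
  simpa [segmentIntegral] using hseg.trans hP.mul_le

theorem dist_picardMap_le (hP : IsHolomorphicPicardLindelof S U0 v0 a r M K)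
    (hf : Continuous f) (hfa : ∀ v, f v ∈ closedBall U0 a)
    (hg : Continuous g) (hga : ∀ v, g v ∈ closedBall U0 a)
    (hD : ∀ z, dist (f z) (g z) ≤ D) (v : ℂ) :
    dist (picardMap S U0 v0 r f v) (picardMap S U0 v0 r g v) ≤ r * K * D := by
  have hlip : ∀ w ∈ closedBall v0 r, ‖S (f w) w - S (g w) w‖ ≤ K * D := fun w hw => by
    rw [← dist_eq_norm]
    exact ((hP.lipschitzOnWith w hw).dist_le_mul _ (hfa w) _ (hga w)).trans
      (mul_le_mul_of_nonneg_left (hD w) K.2)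
  rw [dist_eq_norm, picardMap, picardMap, add_sub_add_left_eq_sub, mul_assoc]
  exact norm_segmentIntegral_sub_le (hP.continuousOn_comp_graph hf hfa)
    (hP.continuousOn_comp_graph hg hga) hlip (radialRetraction_mem_closedBall hP.pos v)

theorem hasDerivAt_picardMap [CompleteSpace E] (hP : IsHolomorphicPicardLindelof S U0 v0 a r M K)
    (hfa : ∀ v, f v ∈ closedBall U0 a) (hfd : DifferentiableOn ℂ f (ball v0 r))
    (hv : v ∈ ball v0 r) : HasDerivAt (picardMap S U0 v0 r f) (S (f v) v) v := by
  have hd : DifferentiableOn ℂ (fun z => S (f z) z) (ball v0 r) := fun z hz =>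
    ((hP.differentiableAt (f z, z) ⟨hfa z, ball_subset_closedBall hz⟩).comp
      (f := fun z => (f z, z)) z
      ((hfd.differentiableAt (isOpen_ball.mem_nhds hz)).prodMk differentiableAt_id)
      ).differentiableWithinAt
  have hretr : ∀ z ∈ ball v0 r,
      picardMap S U0 v0 r f z = U0 + segmentIntegral (fun z => S (f z) z) v0 z := fun z hz => by
    rw [picardMap, radialRetraction_of_mem hP.pos (ball_subset_closedBall hz)]
  exact ((hasDerivAt_segmentIntegral hd hv).const_add U0).congr_of_eventuallyEq
    (eventuallyEq_of_mem (isOpen_ball.mem_nhds hv) hretr)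

theorem exists_hasDerivAt [CompleteSpace E] (hP : IsHolomorphicPicardLindelof S U0 v0 a r M K) :
    ∃ U : ℂ → E, U v0 = U0 ∧ ∀ v ∈ ball v0 r, HasDerivAt U (S (U v) v) v := by
  set A : Set (ℂ →ᵇ E) :=
    {f | (∀ v, f v ∈ closedBall U0 a) ∧ DifferentiableOn ℂ f (ball v0 r)}
  have hA : IsClosed A := by
    refine IsClosed.inter (s₁ := {f | ∀ v, f v ∈ closedBall U0 a}) ?_
      (BoundedContinuousFunction.isClosed_setOf_differentiableOn isOpen_ball)
    rw [ofPred_forall]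
    exact isClosed_iInter fun v =>
      isClosed_closedBall.preimage (continuous_eval_const v)
  have : CompleteSpace A := hA.completeSpace_coe
  have : Nonempty A := ⟨⟨.const ℂ U0, fun _ => mem_closedBall_self hP.nonneg,
    differentiableOn_const U0⟩⟩
  let T : A → A := fun f =>
    ⟨.ofNormedAddCommGroup (picardMap S U0 v0 r f) (hP.continuous_picardMap f.1.continuous f.2.1)
      (‖U0‖ + a) fun v =>
        norm_le_of_mem_closedBall (hP.picardMap_mem_closedBall f.1.continuous f.2.1 v),
    hP.picardMap_mem_closedBall f.1.continuous f.2.1, fun v hv =>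
      (hP.hasDerivAt_picardMap f.2.1 f.2.2 hv).differentiableAt.differentiableWithinAt⟩
  have hT : ContractingWith ⟨r * K, mul_nonneg hP.pos.le K.2⟩ T := by
    refine ⟨hP.mul_lt_one, LipschitzWith.of_dist_le_mul fun f g => ?_⟩
    refine (BoundedContinuousFunction.dist_le
      (mul_nonneg (NNReal.coe_nonneg _) dist_nonneg)).2 fun v => ?_
    exact hP.dist_picardMap_le f.1.continuous f.2.1 g.1.continuous g.2.1
      (fun z => BoundedContinuousFunction.dist_coe_le_dist z) v
  set U := hT.fixedPoint T
  have hU : picardMap S U0 v0 r U = U := congrArg (fun f : A => ⇑f.1) hT.fixedPoint_isFixedPt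
  refine ⟨U, by rw [← hU, picardMap_center], fun v hv => ?_⟩
  simpa only [hU] using hP.hasDerivAt_picardMap U.2.1 U.2.2 hv

end IsHolomorphicPicardLindelof

end Picard

def IsUniformlyLipschitzLikeAt {α X Y : Type*} [TopologicalSpace α] [PseudoEMetricSpace X]
    [PseudoEMetricSpace Y] (S : X → α → Y) (U0 : X) (v0 : α) : Prop :=
  ∃ K : ℝ≥0, ∃ s ∈ 𝓝 U0, ∀ᶠ v in 𝓝 v0, LipschitzOnWith K (fun u => S u v) s

namespace IsUniformlyLipschitzLikeAt

variable {S : E → ℂ → E} {U0 : E} {v0 : ℂ}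

theorem eventuallyEq_of_hasDerivAt (hL : IsUniformlyLipschitzLikeAt S U0 v0) {U₁ U₂ : ℂ → E}
    (h₁ : ∀ᶠ v in 𝓝 v0, HasDerivAt U₁ (S (U₁ v) v) v) (h₁0 : U₁ v0 = U0)
    (h₂ : ∀ᶠ v in 𝓝 v0, HasDerivAt U₂ (S (U₂ v) v) v) (h₂0 : U₂ v0 = U0) :
    U₁ =ᶠ[𝓝 v0] U₂ := by
  obtain ⟨K, s, hs, hK⟩ := hL
  have hmem : ∀ {U : ℂ → E}, (∀ᶠ v in 𝓝 v0, HasDerivAt U (S (U v) v) v) → U v0 = U0 →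
      ∀ᶠ v in 𝓝 v0, U v ∈ s := fun h h0 =>
    h.self_of_nhds.continuousAt.preimage_mem_nhds (h0 ▸ hs)
  obtain ⟨ρ, hρ, hball⟩ := eventually_nhds_iff_ball.1
    (hK.and ((h₁.and (hmem h₁ h₁0)).and (h₂.and (hmem h₂ h₂0))))
  filter_upwards [ball_mem_nhds v0 hρ] with v hv
  set γ : ℝ → ℂ := fun t => v0 + t • (v - v0)
  have hγ : ∀ t ∈ Icc (0 : ℝ) 1, γ t ∈ ball v0 ρ := fun t ht => add_smul_sub_mem_ball hv ht
  have hray : ∀ {U : ℂ → E}, (∀ w ∈ ball v0 ρ, HasDerivAt U (S (U w) w) w ∧ U w ∈ s) →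
      ∀ t ∈ Icc (0 : ℝ) 1, HasDerivAt (U ∘ γ) ((v - v0) • S (U (γ t)) (γ t)) t := fun h t ht =>
    (h _ (hγ t ht)).1.comp_add_smul_sub
  have hU₁ := hray fun w hw => (hball w hw).2.1
  have hU₂ := hray fun w hw => (hball w hw).2.2
  have key := ODE_solution_unique_of_mem_Icc_right (s := fun _ => s) (K := ‖v - v0‖₊ * K)
    (v := fun t u => (v - v0) • S u (γ t))
    (fun t ht => (lipschitzWith_smul _).comp_lipschitzOnWith
      (hball _ (hγ t (Ico_subset_Icc_self ht))).1)
    (fun t ht => (hU₁ t ht).continuousAt.continuousWithinAt)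
    (fun t ht => (hU₁ t (Ico_subset_Icc_self ht)).hasDerivWithinAt)
    (fun t ht => (hball _ (hγ t (Ico_subset_Icc_self ht))).2.1.2)
    (fun t ht => (hU₂ t ht).continuousAt.continuousWithinAt)
    (fun t ht => (hU₂ t (Ico_subset_Icc_self ht)).hasDerivWithinAt)
    (fun t ht => (hball _ (hγ t (Ico_subset_Icc_self ht))).2.2.2)
    (by simp [γ, h₁0, h₂0])
  simpa [γ] using key (right_mem_Icc.2 zero_le_one)

theorem exists_hasDerivAt [CompleteSpace E] (hL : IsUniformlyLipschitzLikeAt S U0 v0)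
    (hS : ∀ᶠ p in 𝓝 (U0, v0), DifferentiableAt ℂ (uncurry S) p) :
    ∃ r > 0, ∃ U : ℂ → E, U v0 = U0 ∧ ∀ v ∈ ball v0 r, HasDerivAt U (S (U v) v) v := by
  obtain ⟨K, s, hs, hK⟩ := hL
  set M := ‖S U0 v0‖ + 1
  have hgood : ∀ᶠ p in 𝓝 (U0, v0), DifferentiableAt ℂ (uncurry S) p ∧ ‖uncurry S p‖ ≤ M ∧
      LipschitzOnWith K (fun u => S u p.2) s :=
    hS.and (((hS.self_of_nhds.continuousAt.norm.eventually_lt continuousAt_const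
      (lt_add_one _)).mono fun _ h => h.le).and (continuous_snd.tendsto (U0, v0) |>.eventually hK))
  obtain ⟨a, ⟨has, hag⟩, ha⟩ := (((eventually_closedBall_subset hs).and
    (eventually_closedBall_subset hgood)).filter_mono nhdsWithin_le_nhds).and
    (self_mem_nhdsWithin (s := Ioi 0)) |>.exists
  obtain ⟨r, ⟨hra, hrM, hrK⟩, hr⟩ := ((eventually_lt_nhds ha).and
    (((continuous_mul_const M).continuousAt.eventually_lt continuousAt_const
      (by simpa : (0 : ℝ) * M < a)).and
    ((continuous_mul_const (K : ℝ)).continuousAt.eventually_lt continuousAt_const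
      (by simp : (0 : ℝ) * K < 1))
    ) |>.filter_mono nhdsWithin_le_nhds).and (self_mem_nhdsWithin (s := Ioi 0)) |>.exists
  have hdom : closedBall U0 a ×ˢ closedBall v0 r ⊆ {p | DifferentiableAt ℂ (uncurry S) p ∧
      ‖uncurry S p‖ ≤ M ∧ LipschitzOnWith K (fun u => S u p.2) s} :=
    (prod_mono_right (closedBall_subset_closedBall hra.le)).trans
      ((closedBall_prod_same U0 v0 a).symm ▸ hag)
  have hP : IsHolomorphicPicardLindelof S U0 v0 a r M K :=
    { differentiableAt := fun p hp => (hdom hp).1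
      norm_le := fun p hp => (hdom hp).2.1
      lipschitzOnWith := fun v hv =>
        (hdom (mk_mem_prod (mem_closedBall_self (le_of_lt ha)) hv)).2.2.mono has
      nonneg := le_of_lt ha
      pos := hr
      mul_le := hrM.le
      mul_lt_one := hrK }
  exact ⟨r, hr, hP.exists_hasDerivAt⟩

end IsUniformlyLipschitzLikeAt

end

theorem stmt_1_general {N : ℕ} (U0 : Fin N → ℂ) (v0 : ℂ)
    (S : (Fin N → ℂ) → ℂ → (Fin N → ℂ))
    (hol : ∃ O : Set ((Fin N → ℂ) × ℂ), IsOpen O ∧ ((U0, v0) : (Fin N → ℂ) × ℂ) ∈ O ∧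
      DifferentiableOn ℂ (fun p => S p.1 p.2) O)
    (hlip : ∃ K : ℝ, ∃ O ∈ nhds ((U0, v0) : (Fin N → ℂ) × ℂ),
      ∀ (A B : Fin N → ℂ) (v : ℂ), ((A, v) : (Fin N → ℂ) × ℂ) ∈ O →
        ((B, v) : (Fin N → ℂ) × ℂ) ∈ O → ‖S A v - S B v‖ ≤ K * ‖A - B‖) :
    (∃ V : Set ℂ, IsOpen V ∧ v0 ∈ V ∧ ∃ U : ℂ → Fin N → ℂ,
        U v0 = U0 ∧ ∀ v ∈ V, HasDerivAt U (S (U v) v) v) ∧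
    (∀ (U1 U2 : ℂ → Fin N → ℂ) (V1 V2 : Set ℂ),
        IsOpen V1 → IsOpen V2 → v0 ∈ V1 → v0 ∈ V2 →
        U1 v0 = U0 → U2 v0 = U0 →
        (∀ v ∈ V1, HasDerivAt U1 (S (U1 v) v) v) →
        (∀ v ∈ V2, HasDerivAt U2 (S (U2 v) v) v) →
        ∃ V3 : Set ℂ, IsOpen V3 ∧ v0 ∈ V3 ∧ EqOn U1 U2 V3) := by
  obtain ⟨O, hO, hO0, hdiff⟩ := hol
  have hS : ∀ᶠ p in 𝓝 (U0, v0), DifferentiableAt ℂ (uncurry S) p :=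
    eventually_of_mem (hO.mem_nhds hO0) fun p hp => hdiff.differentiableAt (hO.mem_nhds hp)
  have hL : IsUniformlyLipschitzLikeAt S U0 v0 := by
    obtain ⟨K, O', hO', hK⟩ := hlip
    obtain ⟨s, hs, w, hw, hsw⟩ := mem_nhds_prod_iff.1 hO'
    refine ⟨K.toNNReal, s, hs, eventually_of_mem hw fun v hv =>
      LipschitzOnWith.of_dist_le_mul fun A hA B hB => ?_⟩
    rw [dist_eq_norm, dist_eq_norm]
    exact (hK A B v (hsw ⟨hA, hv⟩) (hsw ⟨hB, hv⟩)).trans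
      (mul_le_mul_of_nonneg_right (Real.le_coe_toNNReal K) (norm_nonneg _))
  refine ⟨?_, fun U1 U2 V1 V2 hV1 hV2 hv1 hv2 h10 h20 hs1 hs2 => ?_⟩
  · obtain ⟨r, hr, U, hU0, hU⟩ := hL.exists_hasDerivAt hS
    exact ⟨ball v0 r, isOpen_ball, mem_ball_self hr, U, hU0, hU⟩
  · obtain ⟨ε, hε, hEq⟩ := Metric.mem_nhds_iff.1 (hL.eventuallyEq_of_hasDerivAt
      (eventually_of_mem (hV1.mem_nhds hv1) hs1) h10 (eventually_of_mem (hV2.mem_nhds hv2) hs2) h20)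
    exact ⟨ball v0 ε, isOpen_ball, mem_ball_self hε, hEq⟩

/-- **Local existence and uniqueness for uniformly Lipschitz-like holomorphic Cauchy
problems.** `ℂ^N` (modelled as `Fin N → ℂ`) carries the maximum coordinate norm.  If `S` is
holomorphic on an open neighbourhood of `(U0, v0)` and uniformly Lipschitz-like at
`(U0, v0)` (i.e. `‖S U v - S V v‖ ≤ K ‖U - V‖` uniformly in `v` on a neighbourhood), then
the Cauchy problem `U' = S (U v) v`, `U v0 = U0` has a holomorphic solution on some open
neighbourhood of `v0`, and the germ of the solution at `v0` is unique. -/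
theorem stmt_1 {N : ℕ} (hN : 1 ≤ N) (U0 : Fin N → ℂ) (v0 : ℂ)
    (S : (Fin N → ℂ) → ℂ → (Fin N → ℂ))
    (hol : ∃ O : Set ((Fin N → ℂ) × ℂ), IsOpen O ∧ ((U0, v0) : (Fin N → ℂ) × ℂ) ∈ O ∧
      DifferentiableOn ℂ (fun p => S p.1 p.2) O)
    (hlip : ∃ K : ℝ, ∃ O ∈ nhds ((U0, v0) : (Fin N → ℂ) × ℂ),
      ∀ (A B : Fin N → ℂ) (v : ℂ), ((A, v) : (Fin N → ℂ) × ℂ) ∈ O →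
        ((B, v) : (Fin N → ℂ) × ℂ) ∈ O → ‖S A v - S B v‖ ≤ K * ‖A - B‖) :
    (∃ V : Set ℂ, IsOpen V ∧ v0 ∈ V ∧ ∃ U : ℂ → Fin N → ℂ,
        U v0 = U0 ∧ ∀ v ∈ V, HasDerivAt U (S (U v) v) v) ∧
    (∀ (U1 U2 : ℂ → Fin N → ℂ) (V1 V2 : Set ℂ),
        IsOpen V1 → IsOpen V2 → v0 ∈ V1 → v0 ∈ V2 →
        U1 v0 = U0 → U2 v0 = U0 →
        (∀ v ∈ V1, HasDerivAt U1 (S (U1 v) v) v) →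
        (∀ v ∈ V2, HasDerivAt U2 (S (U2 v) v) v) →
        ∃ V3 : Set ℂ, IsOpen V3 ∧ v0 ∈ V3 ∧ EqOn U1 U2 V3) :=
  stmt_1_general U0 v0 S hol hlip
end

section
/- Let (u0, v0) ∈ ℂ × ℂ and let F be a ℂ-valued function holomorphic on an open neighbourhood of (u0, v0). Then there exists an open neighbourhood V of v0 and a holomorphic function u : V → ℂ with u(v0) = u0 and u′(v) = F(u(v), v) for all v ∈ V; moreover the solution germ is unique: any two holomorphic functions defined on neighbourhoods of v0, taking the value u0 at v0 and satisfying this differential equation near v0, coincide on some neighbourhood of v0. -/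
open Set Metric Filter Topology
open scoped NNReal

/-!
Near `(u0, v0)` the function `F` is bounded, and the Cauchy estimates make it Lipschitz in its
first variable, say with constant `L`. On a small disc around `v0`, the Picard map
`g ↦ u0 + (primitive of v ↦ F (g v) v vanishing at v0)` is well defined because holomorphic
functions on a disc have primitives; by the mean value inequality it preserves the functions
with values in a fixed closed ball around `u0` and contracts sup distances by the factor
`L r < 1`, where `r` is the radius of the disc. Hence the Picard iterates and their derivatives
converge uniformly, and the limit solves the equation. The same contraction estimate, applied to
two solutions, gives uniqueness.
-/

theorem norm_sub_le_of_forall_hasDerivAt_ball {𝕜 G : Type*} [RCLike 𝕜] [NormedAddCommGroup G]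
    [NormedSpace 𝕜 G] {f f' : 𝕜 → G} {c z : 𝕜} {r C : ℝ}
    (hf : ∀ x ∈ ball c r, HasDerivAt f (f' x) x) (hC : ∀ x ∈ ball c r, ‖f' x‖ ≤ C)
    (hz : z ∈ ball c r) : ‖f z - f c‖ ≤ C * r := by
  have hc : c ∈ ball c r := mem_ball_self (pos_of_mem_ball hz)
  calc ‖f z - f c‖ ≤ C * ‖z - c‖ :=
        (convex_ball c r).norm_image_sub_le_of_norm_hasDerivWithin_le
          (fun x hx => (hf x hx).hasDerivWithinAt) hC hc hz
    _ ≤ C * r := by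
        gcongr
        · exact (norm_nonneg _).trans (hC c hc)
        · exact (mem_ball_iff_norm.mp hz).le

theorem DifferentiableOn.lipschitzOnWith_ball {E F : Type*} [NormedAddCommGroup E]
    [NormedSpace ℂ E] [NormedAddCommGroup F] [NormedSpace ℂ F] {f : E → F} {c : E} {R M : ℝ}
    (hf : DifferentiableOn ℂ f (ball c R)) (hM : ∀ z ∈ ball c R, ‖f z‖ ≤ M) :
    LipschitzOnWith (3 * M / R).toNNReal f (ball c (R / 3)) := by
  refine LipschitzOnWith.of_dist_le_mul fun x hx y hy => ?_
  have hsub : ball y (2 * (R / 3)) ⊆ ball c R :=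
    ball_subset_ball' (by linarith [mem_ball.mp hy])
  have hmaps : MapsTo f (ball y (2 * (R / 3))) (closedBall (f y) (2 * M)) := fun z hz => by
    rw [mem_closedBall, dist_eq_norm]
    linarith [norm_sub_le (f z) (f y), hM z (hsub hz),
      hM y (hsub (mem_ball_self (by linarith [pos_of_mem_ball hy])))]
  have hxy : x ∈ ball y (2 * (R / 3)) := by
    rw [mem_ball]
    linarith [dist_triangle_right x y c, mem_ball.mp hx, mem_ball.mp hy]
  calc _ ≤ 2 * M / (2 * (R / 3)) * _ :=
        Complex.dist_le_div_mul_dist_of_mapsTo_ball (hf.mono hsub) hmaps hxy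
    _ ≤ (3 * M / R).toNNReal * _ := by
        gcongr
        rw [Real.coe_toNNReal']
        exact le_of_eq_of_le (by field_simp) (le_max_left _ _)

theorem exists_tendstoUniformlyOn_of_dist_le_geometric {α E : Type*} [PseudoMetricSpace E]
    [CompleteSpace E] {f : ℕ → α → E} {s : Set α} {C q : ℝ} (hq₀ : 0 ≤ q) (hq : q < 1)
    (hf : ∀ n, ∀ x ∈ s, dist (f n x) (f (n + 1) x) ≤ C * q ^ n) :
    ∃ g : α → E, TendstoUniformlyOn f g atTop s := by
  classical
  have hlim : ∀ x ∈ s, ∃ a, Tendsto (fun n => f n x) atTop (𝓝 a) := fun x hx =>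
    cauchySeq_tendsto_of_complete (cauchySeq_of_le_geometric q C hq (hf · x hx))
  obtain ⟨g, hg⟩ : ∃ g : α → E, ∀ x ∈ s, Tendsto (fun n => f n x) atTop (𝓝 (g x)) :=
    ⟨fun x => if hx : x ∈ s then (hlim x hx).choose else f 0 x,
      fun x hx => by simpa [hx] using (hlim x hx).choose_spec⟩
  refine ⟨g, Metric.tendstoUniformlyOn_iff.mpr fun ε hε => ?_⟩
  have hsmall : Tendsto (fun n => C * q ^ n / (1 - q)) atTop (𝓝 0) := by
    simpa using ((tendsto_pow_atTop_nhds_zero_of_lt_one hq₀ hq).const_mul C).div_const (1 - q)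
  filter_upwards [hsmall.eventually (gt_mem_nhds hε)] with n hn x hx
  rw [dist_comm]
  exact (dist_le_of_le_geometric_of_tendsto q C hq (hf · x hx) (hg x hx) n).trans_lt hn

/-- The last two conditions make the Picard map preserve functions with values in
`closedBall u₀ ρ` and contract sup distances by the factor `L r`. -/
structure IsHolomorphicPicardLindelof_s2 (F : ℂ → ℂ → ℂ) (u₀ v₀ : ℂ) (ρ r : ℝ) (L M : ℝ≥0) :
    Prop where
  differentiableOn :
    DifferentiableOn ℂ (fun p : ℂ × ℂ => F p.1 p.2) (closedBall u₀ ρ ×ˢ ball v₀ r)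
  lipschitzOnWith : ∀ v ∈ ball v₀ r, LipschitzOnWith L (F · v) (closedBall u₀ ρ)
  norm_le : ∀ x ∈ closedBall u₀ ρ, ∀ v ∈ ball v₀ r, ‖F x v‖ ≤ M
  mul_le : M * r ≤ ρ
  mul_lt_one : L * r < 1

theorem exists_isHolomorphicPicardLindelof {F : ℂ → ℂ → ℂ} {u₀ v₀ : ℂ} {O : Set (ℂ × ℂ)}
    (hO : O ∈ 𝓝 (u₀, v₀)) (hF : DifferentiableOn ℂ (fun p : ℂ × ℂ => F p.1 p.2) O) :
    ∃ ρ r : ℝ, ∃ L M : ℝ≥0, 0 < ρ ∧ 0 < r ∧ IsHolomorphicPicardLindelof_s2 F u₀ v₀ ρ r L M := by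
  set M : ℝ≥0 := ‖F u₀ v₀‖₊ + 1
  have hbound : ∀ᶠ p : ℂ × ℂ in 𝓝 (u₀, v₀), ‖F p.1 p.2‖ < M :=
    (hF.continuousOn.continuousAt hO).norm.eventually_lt continuousAt_const (by simp [M])
  obtain ⟨ε, hε, hεO⟩ := Metric.mem_nhds_iff.mp (inter_mem hO hbound)
  rw [← ball_prod_same] at hεO
  have hεF : ∀ x ∈ ball u₀ ε, ∀ v ∈ ball v₀ ε, (x, v) ∈ O ∧ ‖F x v‖ ≤ M :=
    fun x hx v hv => ⟨(hεO (mk_mem_prod hx hv)).1, le_of_lt (hεO (mk_mem_prod hx hv)).2⟩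
  set L : ℝ≥0 := (3 * M / ε).toNNReal
  have hsmall : ∀ᶠ r in 𝓝 (0 : ℝ), M * r < ε / 6 ∧ L * r < 1 ∧ r < ε :=
    (ContinuousAt.eventually_lt (by fun_prop) continuousAt_const (by simpa using hε)).and <|
      (ContinuousAt.eventually_lt (by fun_prop) continuousAt_const (by simp)).and <|
      ContinuousAt.eventually_lt (by fun_prop) continuousAt_const hε
  obtain ⟨r, ⟨hMr, hLr, hrε⟩, hr⟩ :=
    ((hsmall.filter_mono nhdsWithin_le_nhds).and (self_mem_nhdsWithin (s := Ioi 0))).exists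
  have hsub : ∀ x ∈ closedBall u₀ (ε / 6), ∀ v ∈ ball v₀ r, (x, v) ∈ O ∧ ‖F x v‖ ≤ M :=
    fun x hx v hv => hεF x (closedBall_subset_ball (by linarith) hx) v (ball_subset_ball hrε.le hv)
  refine ⟨ε / 6, r, L, M, by positivity, hr,
    { differentiableOn := hF.mono fun p hp => (hsub p.1 hp.1 p.2 hp.2).1
      lipschitzOnWith := fun v hv => ?_
      norm_le := fun x hx v hv => (hsub x hx v hv).2
      mul_le := hMr.le
      mul_lt_one := hLr }⟩
  have hv' : v ∈ ball v₀ ε := ball_subset_ball hrε.le hv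
  have hdiff : DifferentiableOn ℂ (F · v) (ball u₀ ε) :=
    hF.comp (differentiableOn_id.prodMk (differentiableOn_const v))
      fun x hx => (hεF x hx v hv').1
  exact (hdiff.lipschitzOnWith_ball fun x hx => (hεF x hx v hv').2).mono
    (closedBall_subset_ball (by linarith))

namespace IsHolomorphicPicardLindelof_s2

variable {F : ℂ → ℂ → ℂ} {u₀ v₀ : ℂ} {ρ r : ℝ} {L M : ℝ≥0}

theorem mono (hF : IsHolomorphicPicardLindelof_s2 F u₀ v₀ ρ r L M) {r' : ℝ} (hr : r' ≤ r) :
    IsHolomorphicPicardLindelof_s2 F u₀ v₀ ρ r' L M where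
  differentiableOn := hF.differentiableOn.mono (prod_mono subset_rfl (ball_subset_ball hr))
  lipschitzOnWith v hv := hF.lipschitzOnWith v (ball_subset_ball hr hv)
  norm_le x hx v hv := hF.norm_le x hx v (ball_subset_ball hr hv)
  mul_le := (mul_le_mul_of_nonneg_left hr M.2).trans hF.mul_le
  mul_lt_one := (mul_le_mul_of_nonneg_left hr L.2).trans_lt hF.mul_lt_one

theorem differentiableOn_comp (hF : IsHolomorphicPicardLindelof_s2 F u₀ v₀ ρ r L M)
    {g : ℂ → ℂ} (hg : DifferentiableOn ℂ g (ball v₀ r))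
    (hgρ : MapsTo g (ball v₀ r) (closedBall u₀ ρ)) :
    DifferentiableOn ℂ (fun v => F (g v) v) (ball v₀ r) :=
  hF.differentiableOn.comp (hg.prodMk differentiableOn_id) fun _ hv => ⟨hgρ hv, hv⟩

theorem exists_picard_step (hF : IsHolomorphicPicardLindelof_s2 F u₀ v₀ ρ r L M)
    {g : ℂ → ℂ} (hg : DifferentiableOn ℂ g (ball v₀ r))
    (hgρ : MapsTo g (ball v₀ r) (closedBall u₀ ρ)) :
    ∃ f : ℂ → ℂ, f v₀ = u₀ ∧ (∀ v ∈ ball v₀ r, HasDerivAt f (F (g v) v) v) ∧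
      MapsTo f (ball v₀ r) (closedBall u₀ ρ) := by
  obtain ⟨f, hf₀, hf⟩ := (hF.differentiableOn_comp hg hgρ).isExactOn_ball.with_val_at v₀ u₀
  refine ⟨f, hf₀, hf, fun v hv => ?_⟩
  rw [mem_closedBall, dist_eq_norm, ← hf₀]
  calc ‖f v - f v₀‖ ≤ M * r :=
        norm_sub_le_of_forall_hasDerivAt_ball hf (fun w hw => hF.norm_le _ (hgρ hw) w hw) hv
    _ ≤ ρ := hF.mul_le

theorem norm_sub_le_of_hasDerivAt (hF : IsHolomorphicPicardLindelof_s2 F u₀ v₀ ρ r L M)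
    {f₁ f₂ g₁ g₂ : ℂ → ℂ} {B : ℝ}
    (hf₁ : ∀ v ∈ ball v₀ r, HasDerivAt f₁ (F (g₁ v) v) v)
    (hf₂ : ∀ v ∈ ball v₀ r, HasDerivAt f₂ (F (g₂ v) v) v) (h₀ : f₁ v₀ = f₂ v₀)
    (hg₁ : MapsTo g₁ (ball v₀ r) (closedBall u₀ ρ)) (hg₂ : MapsTo g₂ (ball v₀ r) (closedBall u₀ ρ))
    (hB : ∀ v ∈ ball v₀ r, ‖g₁ v - g₂ v‖ ≤ B) {v : ℂ} (hv : v ∈ ball v₀ r) :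
    ‖f₁ v - f₂ v‖ ≤ L * r * B := by
  have hderiv : ∀ w ∈ ball v₀ r, HasDerivAt (f₁ - f₂) (F (g₁ w) w - F (g₂ w) w) w :=
    fun w hw => (hf₁ w hw).sub (hf₂ w hw)
  have hbound : ∀ w ∈ ball v₀ r, ‖F (g₁ w) w - F (g₂ w) w‖ ≤ L * B := fun w hw => by
    rw [← dist_eq_norm]
    refine ((hF.lipschitzOnWith w hw).dist_le_mul _ (hg₁ hw) _ (hg₂ hw)).trans ?_
    rw [dist_eq_norm]
    gcongr
    exact hB w hw
  calc ‖f₁ v - f₂ v‖ = ‖(f₁ - f₂) v - (f₁ - f₂) v₀‖ := by simp [h₀]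
    _ ≤ L * B * r := norm_sub_le_of_forall_hasDerivAt_ball hderiv hbound hv
    _ = L * r * B := by ring

theorem norm_sub_le_geometric (hF : IsHolomorphicPicardLindelof_s2 F u₀ v₀ ρ r L M)
    {a b : ℕ → ℂ → ℂ} (ha : ∀ n, ∀ v ∈ ball v₀ r, HasDerivAt (a (n + 1)) (F (a n v) v) v)
    (hb : ∀ n, ∀ v ∈ ball v₀ r, HasDerivAt (b (n + 1)) (F (b n v) v) v)
    (h₀ : ∀ n, a (n + 1) v₀ = b (n + 1) v₀)
    (haρ : ∀ n, MapsTo (a n) (ball v₀ r) (closedBall u₀ ρ))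
    (hbρ : ∀ n, MapsTo (b n) (ball v₀ r) (closedBall u₀ ρ)) (n : ℕ) {v : ℂ}
    (hv : v ∈ ball v₀ r) : ‖a n v - b n v‖ ≤ 2 * ρ * (L * r) ^ n := by
  induction n generalizing v with
  | zero =>
    rw [pow_zero, mul_one, ← dist_eq_norm]
    linarith [dist_triangle_right (a 0 v) (b 0 v) u₀, mem_closedBall.mp (haρ 0 hv),
      mem_closedBall.mp (hbρ 0 hv)]
  | succ n ih =>
    calc ‖a (n + 1) v - b (n + 1) v‖ ≤ L * r * (2 * ρ * (L * r) ^ n) :=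
          hF.norm_sub_le_of_hasDerivAt (ha n) (hb n) (h₀ n) (haρ n) (hbρ n) (fun _ hw => ih hw) hv
      _ = 2 * ρ * (L * r) ^ (n + 1) := by ring

theorem tendstoUniformlyOn_comp (hF : IsHolomorphicPicardLindelof_s2 F u₀ v₀ ρ r L M)
    {U : ℕ → ℂ → ℂ} {u : ℂ → ℂ} (hU : TendstoUniformlyOn U u atTop (ball v₀ r))
    (hUρ : ∀ n, MapsTo (U n) (ball v₀ r) (closedBall u₀ ρ))
    (huρ : MapsTo u (ball v₀ r) (closedBall u₀ ρ)) :
    TendstoUniformlyOn (fun n v => F (U n v) v) (fun v => F (u v) v) atTop (ball v₀ r) := by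
  rw [Metric.tendstoUniformlyOn_iff] at hU ⊢
  intro ε hε
  filter_upwards [hU (ε / (L + 1)) (by positivity)] with n hn v hv
  calc dist (F (u v) v) (F (U n v) v) ≤ L * dist (u v) (U n v) :=
        (hF.lipschitzOnWith v hv).dist_le_mul _ (huρ hv) _ (hUρ n hv)
    _ ≤ (L + 1) * dist (u v) (U n v) := by gcongr; linarith
    _ < (L + 1) * (ε / (L + 1)) := by gcongr; exact hn v hv
    _ = ε := by field_simp

theorem exists_hasDerivAt_s2 (hF : IsHolomorphicPicardLindelof_s2 F u₀ v₀ ρ r L M) (hr : 0 < r) :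
    ∃ u : ℂ → ℂ, u v₀ = u₀ ∧ ∀ v ∈ ball v₀ r, HasDerivAt u (F (u v) v) v := by
  have hρ : 0 ≤ ρ := (mul_nonneg M.2 hr.le).trans hF.mul_le
  choose! T hT₀ hT hTρ using fun g (hg : DifferentiableOn ℂ g (ball v₀ r) ∧
      MapsTo g (ball v₀ r) (closedBall u₀ ρ)) => hF.exists_picard_step hg.1 hg.2
  set U : ℕ → ℂ → ℂ := fun n => T^[n] fun _ => u₀
  have hUsucc : ∀ n, U (n + 1) = T (U n) := fun n => Function.iterate_succ_apply' T n _
  have hU : ∀ n, DifferentiableOn ℂ (U n) (ball v₀ r) ∧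
      MapsTo (U n) (ball v₀ r) (closedBall u₀ ρ) := by
    intro n
    induction n with
    | zero => exact ⟨differentiableOn_const _, fun _ _ => mem_closedBall_self hρ⟩
    | succ n ih =>
      rw [hUsucc]
      exact ⟨fun v hv => (hT _ ih v hv).differentiableAt.differentiableWithinAt, hTρ _ ih⟩
  have hU₀ : ∀ n, U n v₀ = u₀ := by
    rintro (_ | n)
    · rfl
    · rw [hUsucc]
      exact hT₀ _ (hU n)
  have hderiv : ∀ n, ∀ v ∈ ball v₀ r, HasDerivAt (U (n + 1)) (F (U n v) v) v := fun n => by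
    rw [hUsucc]
    exact hT _ (hU n)
  obtain ⟨u, hu⟩ := exists_tendstoUniformlyOn_of_dist_le_geometric (f := U) (C := 2 * ρ)
    (mul_nonneg L.2 hr.le) hF.mul_lt_one fun n v hv => by
      rw [dist_comm, dist_eq_norm]
      exact hF.norm_sub_le_geometric (fun n => hderiv (n + 1)) hderiv
        (fun n => by rw [hU₀, hU₀]) (fun n => (hU (n + 1)).2) (fun n => (hU n).2) n hv
  have huρ : MapsTo u (ball v₀ r) (closedBall u₀ ρ) := fun v hv =>
    isClosed_closedBall.mem_of_tendsto (hu.tendsto_at hv) (.of_forall fun n => (hU n).2 hv)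
  refine ⟨u, tendsto_nhds_unique (hu.tendsto_at (mem_ball_self hr)) (by simp [hU₀]),
    fun v hv => ?_⟩
  exact hasDerivAt_of_tendstoUniformlyOn (f := fun n => U (n + 1)) (g' := fun w => F (u w) w)
    isOpen_ball
    (hF.tendstoUniformlyOn_comp hu (fun n => (hU n).2) huρ) (.of_forall hderiv)
    (fun w hw => (hu.tendsto_at hw).comp (tendsto_add_atTop_nat 1)) hv

theorem eqOn_of_hasDerivAt (hF : IsHolomorphicPicardLindelof_s2 F u₀ v₀ ρ r L M)
    {u₁ u₂ : ℂ → ℂ} (h₁ : u₁ v₀ = u₀) (h₂ : u₂ v₀ = u₀)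
    (hu₁ : ∀ v ∈ ball v₀ r, HasDerivAt u₁ (F (u₁ v) v) v)
    (hu₂ : ∀ v ∈ ball v₀ r, HasDerivAt u₂ (F (u₂ v) v) v)
    (hu₁ρ : MapsTo u₁ (ball v₀ r) (closedBall u₀ ρ))
    (hu₂ρ : MapsTo u₂ (ball v₀ r) (closedBall u₀ ρ)) : EqOn u₁ u₂ (ball v₀ r) := by
  intro v hv
  have hbound := fun n => hF.norm_sub_le_geometric (a := fun _ => u₁) (b := fun _ => u₂)
    (fun _ => hu₁) (fun _ => hu₂) (fun _ => h₁.trans h₂.symm) (fun _ => hu₁ρ) (fun _ => hu₂ρ) n hv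
  have hlim : Tendsto (fun n => 2 * ρ * (L * r) ^ n) atTop (𝓝 0) := by
    simpa using (tendsto_pow_atTop_nhds_zero_of_lt_one
      (mul_nonneg L.2 (pos_of_mem_ball hv).le) hF.mul_lt_one).const_mul (2 * ρ)
  exact sub_eq_zero.mp (norm_le_zero_iff.mp (ge_of_tendsto' hlim hbound))

theorem eventuallyEq_of_hasDerivAt (hF : IsHolomorphicPicardLindelof_s2 F u₀ v₀ ρ r L M)
    (hρ : 0 < ρ) (hr : 0 < r) {u₁ u₂ : ℂ → ℂ} (h₁ : u₁ v₀ = u₀) (h₂ : u₂ v₀ = u₀)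
    (hu₁ : ∀ᶠ v in 𝓝 v₀, HasDerivAt u₁ (F (u₁ v) v) v)
    (hu₂ : ∀ᶠ v in 𝓝 v₀, HasDerivAt u₂ (F (u₂ v) v) v) : u₁ =ᶠ[𝓝 v₀] u₂ := by
  have hu₁ρ : ∀ᶠ v in 𝓝 v₀, u₁ v ∈ closedBall u₀ ρ :=
    hu₁.self_of_nhds.continuousAt.preimage_mem_nhds (h₁ ▸ closedBall_mem_nhds u₀ hρ)
  have hu₂ρ : ∀ᶠ v in 𝓝 v₀, u₂ v ∈ closedBall u₀ ρ :=
    hu₂.self_of_nhds.continuousAt.preimage_mem_nhds (h₂ ▸ closedBall_mem_nhds u₀ hρ)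
  obtain ⟨δ, hδ, hball⟩ := Metric.eventually_nhds_iff_ball.mp ((hu₁.and hu₂).and (hu₁ρ.and hu₂ρ))
  have hsub : ball v₀ (min δ r) ⊆ ball v₀ δ := ball_subset_ball (min_le_left δ r)
  refine eventuallyEq_of_mem (ball_mem_nhds v₀ (lt_min hδ hr)) ?_
  exact (hF.mono (min_le_right δ r)).eqOn_of_hasDerivAt h₁ h₂
    (fun v hv => (hball v (hsub hv)).1.1) (fun v hv => (hball v (hsub hv)).1.2)
    (fun v hv => (hball v (hsub hv)).2.1) (fun v hv => (hball v (hsub hv)).2.2)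

end IsHolomorphicPicardLindelof_s2

/-- **The one-dimensional first order holomorphic Cauchy problem.**  If `F` is holomorphic
on an open neighbourhood of `(u0, v0) ∈ ℂ × ℂ`, then the Cauchy problem
`u' = F (u v) v`, `u v0 = u0` admits a holomorphic solution on some open neighbourhood of
`v0`, and the germ of the solution at `v0` is unique.  (No Lipschitz hypothesis is
needed in dimension one.) -/
theorem stmt_2 (u0 v0 : ℂ) (F : ℂ → ℂ → ℂ)
    (hol : ∃ O : Set (ℂ × ℂ), IsOpen O ∧ ((u0, v0) : ℂ × ℂ) ∈ O ∧
      DifferentiableOn ℂ (fun p => F p.1 p.2) O) :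
    (∃ V : Set ℂ, IsOpen V ∧ v0 ∈ V ∧ ∃ u : ℂ → ℂ,
        u v0 = u0 ∧ ∀ v ∈ V, HasDerivAt u (F (u v) v) v) ∧
    (∀ (u1 u2 : ℂ → ℂ) (V1 V2 : Set ℂ),
        IsOpen V1 → IsOpen V2 → v0 ∈ V1 → v0 ∈ V2 →
        u1 v0 = u0 → u2 v0 = u0 →
        (∀ v ∈ V1, HasDerivAt u1 (F (u1 v) v) v) →
        (∀ v ∈ V2, HasDerivAt u2 (F (u2 v) v) v) →
        ∃ V3 : Set ℂ, IsOpen V3 ∧ v0 ∈ V3 ∧ EqOn u1 u2 V3) := by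
  obtain ⟨O, hO, hO₀, hF⟩ := hol
  obtain ⟨ρ, r, L, M, hρ, hr, hPL⟩ := exists_isHolomorphicPicardLindelof (hO.mem_nhds hO₀) hF
  refine ⟨?_, fun u1 u2 V1 V2 hV1 hV2 hv1 hv2 hu1 hu2 hd1 hd2 => ?_⟩
  · obtain ⟨u, hu₀, hu⟩ := hPL.exists_hasDerivAt_s2 hr
    exact ⟨ball v0 r, isOpen_ball, mem_ball_self hr, u, hu₀, hu⟩
  · obtain ⟨V3, hV3, hV3o, hv3⟩ := _root_.eventually_nhds_iff.mp <|
      hPL.eventuallyEq_of_hasDerivAt hρ hr hu1 hu2 (eventually_of_mem (hV1.mem_nhds hv1) hd1)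
        (eventually_of_mem (hV2.mem_nhds hv2) hd2)
    exact ⟨V3, hV3o, hv3, hV3⟩
end

section
/- Let 𝒱 ⊆ ℂ be open and let U : 𝒱 → ℂ^N be holomorphic with U′(z) = G(U(z), z) for all z ∈ 𝒱, where G is a ℂ^N-valued holomorphic map on an open neighbourhood of {(U(z), z) : z ∈ 𝒱} in ℂ^N × ℂ, uniformly Lipschitz-like at every point of its domain. Let z0 be a boundary point of 𝒱 and suppose there exist an injective real-analytic regular curve γ : [0,1] → 𝒱 ∪ {z0} with γ(1) = z0 and γ(t) ∈ 𝒱 for t < 1, a strictly increasing sequence t_h → 1 in [0,1), and a point U0 ∈ ℂ^N such that U(γ(t_h)) → U0 and G is holomorphic at (U0, z0). Then U admits analytic continuation up to z0: there exist r > 0 and a holomorphic map W : D(z0,r) → ℂ^N with W(z0) = U0, W′(z) = G(W(z), z) on D(z0,r), and W(γ(t)) = U(γ(t)) for all t < 1 sufficiently close to 1. -/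
/-!
Near `(U0, z0)` the map `G` is holomorphic, hence bounded and, by the Schwarz lemma, uniformly
Lipschitz in its first variable. Picard iteration `V ↦ U1 + ∫_{z1}^z G (V x) x dx`, with
primitives on discs supplied by Morera's theorem, then solves `W' = G (W z) z`, `W z1 = U1` on a
disc `ball z1 r` whose radius does not depend on the initial point `(U1, z1)` near `(U0, z0)`.
Starting from `z1 = γ (t_h)`, `U1 = U z1` for large `h`, this disc contains `z0` and the tail of
`γ`. Solutions through the same point agree on small discs (the mean value inequality makes the
difference contract), so `W = U` near `z1`, hence along the tail of `γ` by the identity theorem,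
and continuity at `z0` gives `W z0 = U0`.
-/

open Set

open Metric Filter Topology
open scoped NNReal

theorem norm_sub_center_le_of_hasDerivAt {𝕜 G : Type*} [RCLike 𝕜] [NormedAddCommGroup G]
    [NormedSpace 𝕜 G] {f f' : 𝕜 → G} {c x : 𝕜} {r C : ℝ}
    (hf : ∀ y ∈ ball c r, HasDerivAt f (f' y) y) (hC : ∀ y ∈ ball c r, ‖f' y‖ ≤ C)
    (hx : x ∈ ball c r) : ‖f x - f c‖ ≤ C * r := by
  have hc : c ∈ ball c r := mem_ball_self (pos_of_mem_ball hx)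
  calc ‖f x - f c‖ ≤ C * ‖x - c‖ :=
        (convex_ball c r).norm_image_sub_le_of_norm_hasDerivWithin_le
          (fun y hy => (hf y hy).hasDerivWithinAt) hC hc hx
    _ ≤ C * r := by
        gcongr
        · exact (norm_nonneg _).trans (hC c hc)
        · exact (mem_ball_iff_norm.mp hx).le

theorem tendstoUniformlyOn_of_dist_le {ι α β : Type*} [PseudoMetricSpace β] {l : Filter ι}
    {F : ι → α → β} {f : α → β} {s : Set α} {b : ι → ℝ} (hb : Tendsto b l (𝓝 0))
    (h : ∀ n, ∀ x ∈ s, dist (f x) (F n x) ≤ b n) : TendstoUniformlyOn F f l s :=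
  Metric.tendstoUniformlyOn_iff.mpr fun ε hε => by
    filter_upwards [hb.eventually (gt_mem_nhds hε)] with n hn x hx
    exact (h n x hx).trans_lt hn

theorem eventually_nhdsGT_zero_mul_lt {a b : ℝ} (hb : 0 < b) : ∀ᶠ r in 𝓝[>] 0, r * a < b :=
  nhdsWithin_le_nhds <|
    ((continuous_mul_const a).tendsto' 0 0 (zero_mul a)).eventually (eventually_lt_nhds hb)

section

variable {E F : Type*} [NormedAddCommGroup E] [NormedSpace ℂ E]
  [NormedAddCommGroup F] [NormedSpace ℂ F]

theorem lipschitzOnWith_ball_of_norm_le {f : E → F} {c : E} {R M : ℝ}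
    (hd : DifferentiableOn ℂ f (ball c (3 * R))) (hM : ∀ w ∈ ball c (3 * R), ‖f w‖ ≤ M) :
    LipschitzOnWith (M / R).toNNReal f (ball c R) := by
  refine LipschitzOnWith.of_dist_le_mul fun w hw w' hw' => ?_
  have hR : 0 < R := pos_of_mem_ball hw
  have hsub : ball w' (2 * R) ⊆ ball c (3 * R) :=
    ball_subset_ball' (by linarith [mem_ball.mp hw'])
  have hw'' : w' ∈ ball c (3 * R) := hsub (mem_ball_self (by positivity))
  have hM0 : 0 ≤ M := (norm_nonneg _).trans (hM w' hw'')
  have hmaps : MapsTo f (ball w' (2 * R)) (closedBall (f w') (2 * M)) := fun y hy => by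
    rw [mem_closedBall, dist_eq_norm]
    linarith [norm_sub_le (f y) (f w'), hM y (hsub hy), hM w' hw'']
  have hww' : w ∈ ball w' (2 * R) := by
    rw [mem_ball]; linarith [dist_triangle_right w w' c, mem_ball.mp hw, mem_ball.mp hw']
  calc dist (f w) (f w') ≤ 2 * M / (2 * R) * dist w w' :=
        Complex.dist_le_div_mul_dist_of_mapsTo_ball (hd.mono hsub) hmaps hww'
    _ = (M / R).toNNReal * dist w w' := by
        rw [Real.coe_toNNReal _ (by positivity), mul_div_mul_left _ _ two_ne_zero]

theorem exists_lipschitzOnWith_of_eventually_differentiableAt {G : E → ℂ → E} {w₀ : E} {c : ℂ}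
    (hG : ∀ᶠ p in 𝓝 (w₀, c), DifferentiableAt ℂ (fun p : E × ℂ => G p.1 p.2) p) :
    ∃ ε > 0, ∃ M : ℝ, ∃ K : ℝ≥0, ∀ x ∈ ball c ε,
      (∀ w ∈ ball w₀ ε, DifferentiableAt ℂ (fun p : E × ℂ => G p.1 p.2) (w, x) ∧ ‖G w x‖ ≤ M) ∧
      LipschitzOnWith K (G · x) (ball w₀ ε) := by
  have hbdd : ∀ᶠ p in 𝓝 (w₀, c), ‖G p.1 p.2‖ < ‖G w₀ c‖ + 1 :=
    hG.self_of_nhds.continuousAt.norm.eventually (eventually_lt_nhds (lt_add_one _))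
  obtain ⟨δ, hδ, hbox⟩ := Metric.eventually_nhds_iff_ball.mp (hG.and hbdd)
  have hbox' : ∀ x ∈ ball c δ, ∀ w ∈ ball w₀ δ,
      DifferentiableAt ℂ (fun p : E × ℂ => G p.1 p.2) (w, x) ∧ ‖G w x‖ ≤ ‖G w₀ c‖ + 1 :=
    fun x hx w hw => by
      obtain ⟨hd, hb⟩ := hbox (w, x) (ball_prod_same w₀ c δ ▸ mk_mem_prod hw hx)
      exact ⟨hd, hb.le⟩
  refine ⟨δ / 3, by positivity, ‖G w₀ c‖ + 1, ((‖G w₀ c‖ + 1) / (δ / 3)).toNNReal,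
    fun x hx => ⟨fun w hw => ?_, ?_⟩⟩
  · exact hbox' x (ball_subset_ball (by linarith) hx) w (ball_subset_ball (by linarith) hw)
  · have hx' : x ∈ ball c δ := ball_subset_ball (by linarith) hx
    refine lipschitzOnWith_ball_of_norm_le (fun w hw => ?_) fun w hw => ?_
    · rw [mul_div_cancel₀ _ three_ne_zero] at hw
      exact (DifferentiableAt.comp (f := fun w : E => (w, x)) w (hbox' x hx' w hw).1
        (differentiableAt_id.prodMk (differentiableAt_const x))).differentiableWithinAt
    · rw [mul_div_cancel₀ _ three_ne_zero] at hw
      exact (hbox' x hx' w hw).2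

namespace ComplexODE

theorem eqOn_ball_of_lipschitzOnWith {G : E → ℂ → E} {c : ℂ} {r ρ : ℝ} {w₀ : E} {K : ℝ≥0}
    {W₁ W₂ : ℂ → E} (hGK : ∀ x ∈ ball c r, LipschitzOnWith K (G · x) (closedBall w₀ ρ))
    (hrK : r * K < 1) (h₁ : ∀ x ∈ ball c r, HasDerivAt W₁ (G (W₁ x) x) x)
    (h₂ : ∀ x ∈ ball c r, HasDerivAt W₂ (G (W₂ x) x) x)
    (hW₁ : MapsTo W₁ (ball c r) (closedBall w₀ ρ)) (hW₂ : MapsTo W₂ (ball c r) (closedBall w₀ ρ))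
    (hc : W₁ c = W₂ c) : EqOn W₁ W₂ (ball c r) := by
  intro x hx
  have hq : 0 ≤ r * K := mul_nonneg (pos_of_mem_ball hx).le K.2
  -- Mean value inequality on the ball, iterated: each round gains a factor `r * K`.
  have hbound : ∀ n : ℕ, ∀ y ∈ ball c r, ‖W₁ y - W₂ y‖ ≤ 2 * ρ * (r * K) ^ n := by
    intro n
    induction n with
    | zero =>
      intro y hy
      rw [pow_zero, mul_one, ← dist_eq_norm]
      linarith [dist_triangle_right (W₁ y) (W₂ y) w₀, mem_closedBall.mp (hW₁ hy),
        mem_closedBall.mp (hW₂ hy)]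
    | succ n ih =>
      intro y hy
      have hmv := norm_sub_center_le_of_hasDerivAt (f := W₁ - W₂)
        (C := K * (2 * ρ * (r * K) ^ n)) (fun z hz => (h₁ z hz).sub (h₂ z hz))
        (fun z hz => ((hGK z hz).norm_sub_le (hW₁ hz) (hW₂ hz)).trans
          (mul_le_mul_of_nonneg_left (ih z hz) K.2)) hy
      simp only [Pi.sub_apply, hc, sub_self, sub_zero] at hmv
      exact hmv.trans_eq (by ring)
  have hlim : Tendsto (fun n : ℕ => 2 * ρ * (r * K) ^ n) atTop (𝓝 0) := by
    simpa using (tendsto_pow_atTop_nhds_zero_of_lt_one hq hrK).const_mul (2 * ρ)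
  exact sub_eq_zero.mp (norm_le_zero_iff.mp (ge_of_tendsto' hlim fun n => hbound n x hx))

theorem eventuallyEq_of_eventually_differentiableAt {G : E → ℂ → E} {c : ℂ} {W₁ W₂ : ℂ → E}
    (hG : ∀ᶠ p in 𝓝 (W₁ c, c), DifferentiableAt ℂ (fun p : E × ℂ => G p.1 p.2) p)
    (h₁ : ∀ᶠ x in 𝓝 c, HasDerivAt W₁ (G (W₁ x) x) x)
    (h₂ : ∀ᶠ x in 𝓝 c, HasDerivAt W₂ (G (W₂ x) x) x) (hc : W₁ c = W₂ c) :
    W₁ =ᶠ[𝓝 c] W₂ := by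
  obtain ⟨ε, hε, _, K, hbox⟩ := exists_lipschitzOnWith_of_eventually_differentiableAt hG
  have hmaps : ∀ W : ℂ → E, W c = W₁ c → (∀ᶠ x in 𝓝 c, HasDerivAt W (G (W x) x) x) →
      ∀ᶠ x in 𝓝 c, W x ∈ closedBall (W₁ c) (ε / 2) := fun W hW hder => by
    rw [← hW]
    exact hder.self_of_nhds.continuousAt.eventually (closedBall_mem_nhds _ (by positivity))
  obtain ⟨δ, hδ, hnear⟩ := Metric.eventually_nhds_iff_ball.mp
    (Filter.Eventually.and (ball_mem_nhds c hε)
      (h₁.and (h₂.and ((hmaps W₁ rfl h₁).and (hmaps W₂ hc.symm h₂)))))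
  have hsmall : ∀ᶠ r in 𝓝[>] (0 : ℝ), r < δ := nhdsWithin_le_nhds (eventually_lt_nhds hδ)
  obtain ⟨r, hrδ, hrK, hr⟩ := (hsmall.and
    ((eventually_nhdsGT_zero_mul_lt (a := K) one_pos).and self_mem_nhdsWithin)).exists
  have hnear' : ∀ x ∈ ball c r, _ := fun x hx => hnear x (ball_subset_ball hrδ.le hx)
  exact mem_of_superset (ball_mem_nhds c hr) (eqOn_ball_of_lipschitzOnWith
    (fun x hx => (hbox x (hnear' x hx).1).2.mono (closedBall_subset_ball (half_lt_self hε))) hrK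
    (fun x hx => (hnear' x hx).2.1) (fun x hx => (hnear' x hx).2.2.1)
    (fun x hx => (hnear' x hx).2.2.2.1) (fun x hx => (hnear' x hx).2.2.2.2) hc)

/-- The Picard operator `V ↦ w₀ + ∫_c^z G (V x) x dx`, integrating along two sides of the
rectangle spanned by `c` and `z`: by Morera's theorem this is a primitive on every disc around
`c` on which the integrand is holomorphic. -/
noncomputable def picardStep (G : E → ℂ → E) (c : ℂ) (w₀ : E) (V : ℂ → E) (z : ℂ) : E :=
  w₀ + Complex.wedgeIntegral c z fun x => G (V x) x

noncomputable def picardIter (G : E → ℂ → E) (c : ℂ) (w₀ : E) (n : ℕ) : ℂ → E :=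
  (picardStep G c w₀)^[n] fun _ => w₀

theorem picardStep_self {G : E → ℂ → E} {c : ℂ} {w₀ : E} {V : ℂ → E} :
    picardStep G c w₀ V c = w₀ := by
  simp [picardStep, Complex.wedgeIntegral]

theorem picardIter_succ {G : E → ℂ → E} {c : ℂ} {w₀ : E} (n : ℕ) :
    picardIter G c w₀ (n + 1) = picardStep G c w₀ (picardIter G c w₀ n) :=
  Function.iterate_succ_apply' _ _ _

theorem picardIter_self {G : E → ℂ → E} {c : ℂ} {w₀ : E} (n : ℕ) : picardIter G c w₀ n c = w₀ := by
  cases n with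
  | zero => rfl
  | succ n => rw [picardIter_succ]; exact picardStep_self

/-- Hypotheses under which Picard iteration converges on `ball c r` inside `closedBall w₀ ρ`. -/
structure IsPicardDisc (G : E → ℂ → E) (c : ℂ) (w₀ : E) (r ρ M : ℝ) (K : ℝ≥0) : Prop where
  differentiableAt : ∀ x ∈ ball c r, ∀ w ∈ closedBall w₀ ρ,
    DifferentiableAt ℂ (fun p : E × ℂ => G p.1 p.2) (w, x)
  norm_le : ∀ x ∈ ball c r, ∀ w ∈ closedBall w₀ ρ, ‖G w x‖ ≤ M
  lipschitzOnWith : ∀ x ∈ ball c r, LipschitzOnWith K (G · x) (closedBall w₀ ρ)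
  nonneg : 0 ≤ ρ
  mul_bound_le : r * M ≤ ρ
  mul_lipschitz_lt : r * K < 1

variable [CompleteSpace E]

namespace IsPicardDisc

variable {G : E → ℂ → E} {c : ℂ} {w₀ : E} {r ρ M : ℝ} {K : ℝ≥0}
  {V V' : ℂ → E}

theorem hasDerivAt_picardStep (hP : IsPicardDisc G c w₀ r ρ M K)
    (hV : DifferentiableOn ℂ V (ball c r)) (hVρ : MapsTo V (ball c r) (closedBall w₀ ρ))
    {z : ℂ} (hz : z ∈ ball c r) : HasDerivAt (picardStep G c w₀ V) (G (V z) z) z := by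
  have hd : DifferentiableOn ℂ (fun x => G (V x) x) (ball c r) := fun x hx =>
    (DifferentiableAt.comp (f := fun x => (V x, x)) x (hP.differentiableAt x hx (V x) (hVρ hx))
      ((hV.differentiableAt (isOpen_ball.mem_nhds hx)).prodMk differentiableAt_id)
      ).differentiableWithinAt
  exact (hd.isConservativeOn.hasDerivAt_wedgeIntegral hd.continuousOn hz).const_add w₀

theorem mapsTo_picardStep (hP : IsPicardDisc G c w₀ r ρ M K)
    (hV : DifferentiableOn ℂ V (ball c r)) (hVρ : MapsTo V (ball c r) (closedBall w₀ ρ)) :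
    MapsTo (picardStep G c w₀ V) (ball c r) (closedBall w₀ ρ) := fun z hz => by
  have hmv := norm_sub_center_le_of_hasDerivAt
    (fun x hx => hP.hasDerivAt_picardStep hV hVρ hx) (fun x hx => hP.norm_le x hx (V x) (hVρ hx)) hz
  rw [picardStep_self] at hmv
  rw [mem_closedBall_iff_norm]
  linarith [hP.mul_bound_le]

theorem norm_picardStep_sub_le (hP : IsPicardDisc G c w₀ r ρ M K) {d : ℝ}
    (hV : DifferentiableOn ℂ V (ball c r)) (hVρ : MapsTo V (ball c r) (closedBall w₀ ρ))
    (hV' : DifferentiableOn ℂ V' (ball c r)) (hV'ρ : MapsTo V' (ball c r) (closedBall w₀ ρ))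
    (hd : ∀ x ∈ ball c r, ‖V x - V' x‖ ≤ d) {z : ℂ} (hz : z ∈ ball c r) :
    ‖picardStep G c w₀ V z - picardStep G c w₀ V' z‖ ≤ r * K * d := by
  have hmv := norm_sub_center_le_of_hasDerivAt
    (f := picardStep G c w₀ V - picardStep G c w₀ V')
    (fun x hx => (hP.hasDerivAt_picardStep hV hVρ hx).sub (hP.hasDerivAt_picardStep hV' hV'ρ hx))
    (fun x hx => ((hP.lipschitzOnWith x hx).norm_sub_le (hVρ hx) (hV'ρ hx)).trans
      (mul_le_mul_of_nonneg_left (hd x hx) K.2)) hz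
  simp only [Pi.sub_apply, picardStep_self, sub_self, sub_zero] at hmv
  exact hmv.trans_eq (by ring)

theorem differentiableOn_picardIter_and_mapsTo (hP : IsPicardDisc G c w₀ r ρ M K) (n : ℕ) :
    DifferentiableOn ℂ (picardIter G c w₀ n) (ball c r) ∧
      MapsTo (picardIter G c w₀ n) (ball c r) (closedBall w₀ ρ) := by
  induction n with
  | zero => exact ⟨differentiableOn_const _, fun _ _ => mem_closedBall_self hP.nonneg⟩
  | succ n ih =>
    rw [picardIter_succ]
    exact ⟨fun z hz => (hP.hasDerivAt_picardStep ih.1 ih.2 hz).differentiableAt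
      |>.differentiableWithinAt, hP.mapsTo_picardStep ih.1 ih.2⟩

theorem dist_picardIter_succ_le (hP : IsPicardDisc G c w₀ r ρ M K) (n : ℕ) {x : ℂ}
    (hx : x ∈ ball c r) :
    dist (picardIter G c w₀ n x) (picardIter G c w₀ (n + 1) x) ≤ ρ * (r * K) ^ n := by
  induction n generalizing x with
  | zero =>
    rw [pow_zero, mul_one, dist_comm]
    exact (hP.differentiableOn_picardIter_and_mapsTo 1).2 hx
  | succ n ih =>
    have h := hP.norm_picardStep_sub_le (d := ρ * (r * K) ^ n)
      (hP.differentiableOn_picardIter_and_mapsTo (n + 1)).1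
      (hP.differentiableOn_picardIter_and_mapsTo (n + 1)).2
      (hP.differentiableOn_picardIter_and_mapsTo n).1
      (hP.differentiableOn_picardIter_and_mapsTo n).2
      (fun y hy => by rw [← dist_eq_norm, dist_comm]; exact ih hy) hx
    rw [← picardIter_succ, ← picardIter_succ, ← dist_eq_norm, dist_comm] at h
    exact h.trans_eq (by ring)

theorem exists_hasDerivAt (hP : IsPicardDisc G c w₀ r ρ M K) (hr : 0 < r) :
    ∃ W : ℂ → E, W c = w₀ ∧ ∀ x ∈ ball c r, HasDerivAt W (G (W x) x) x := by
  have hV := hP.differentiableOn_picardIter_and_mapsTo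
  have hV_deriv (n : ℕ) : ∀ y ∈ ball c r,
      HasDerivAt (picardIter G c w₀ (n + 1)) (G (picardIter G c w₀ n y) y) y := fun y hy => by
    rw [picardIter_succ]
    exact hP.hasDerivAt_picardStep (hV n).1 (hV n).2 hy
  set V := picardIter G c w₀
  set q := r * (K : ℝ)
  have hq : 0 ≤ q := mul_nonneg hr.le K.2
  set W : ℂ → E := fun x => limUnder atTop (V · x)
  have hV_lim (x : ℂ) (hx : x ∈ ball c r) : Tendsto (V · x) atTop (𝓝 (W x)) :=
    (cauchySeq_of_le_geometric q ρ hP.mul_lipschitz_lt fun n =>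
      hP.dist_picardIter_succ_le n hx).tendsto_limUnder
  have hV_dist (n : ℕ) (x : ℂ) (hx : x ∈ ball c r) : dist (W x) (V n x) ≤ ρ * q ^ n / (1 - q) :=
    dist_comm (V n x) (W x) ▸ dist_le_of_le_geometric_of_tendsto q ρ hP.mul_lipschitz_lt
      (fun n => hP.dist_picardIter_succ_le n hx) (hV_lim x hx) n
  have hWρ : MapsTo W (ball c r) (closedBall w₀ ρ) := fun x hx =>
    isClosed_closedBall.mem_of_tendsto (hV_lim x hx) (Eventually.of_forall fun n => (hV n).2 hx)
  have hq_lim : Tendsto (fun n : ℕ => K * (ρ * q ^ n / (1 - q))) atTop (𝓝 0) := by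
    simpa using ((tendsto_pow_atTop_nhds_zero_of_lt_one hq hP.mul_lipschitz_lt).const_mul ρ
      |>.div_const (1 - q) |>.const_mul (K : ℝ))
  refine ⟨W, tendsto_nhds_unique (hV_lim c (mem_ball_self hr)) ?_, fun x hx => ?_⟩
  · simp only [V, picardIter_self, tendsto_const_nhds]
  -- The derivatives `G (V n y) y` of `V (n + 1)` converge uniformly, `G` being Lipschitz in `w`.
  refine hasDerivAt_of_tendstoUniformlyOn (f := fun n => V (n + 1)) (g' := fun y => G (W y) y)
    isOpen_ball (tendstoUniformlyOn_of_dist_le hq_lim fun n y hy => ?_)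
    (Eventually.of_forall hV_deriv)
    (fun y hy => (hV_lim y hy).comp (tendsto_add_atTop_nat 1)) hx
  exact ((hP.lipschitzOnWith y hy).dist_le_mul _ (hWρ hy) _ ((hV n).2 hy)).trans
    (mul_le_mul_of_nonneg_left (hV_dist n y hy) K.2)

end IsPicardDisc

theorem eventually_exists_hasDerivAt_ball {G : E → ℂ → E} {w₀ : E} {c : ℂ}
    (hG : ∀ᶠ p in 𝓝 (w₀, c), DifferentiableAt ℂ (fun p : E × ℂ => G p.1 p.2) p) :
    ∃ r > 0, ∀ᶠ p in 𝓝 (w₀, c), ∃ W : ℂ → E, W p.2 = p.1 ∧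
      ∀ x ∈ ball p.2 r, HasDerivAt W (G (W x) x) x := by
  obtain ⟨ε, hε, M, K, hbox⟩ := exists_lipschitzOnWith_of_eventually_differentiableAt hG
  have hρ : 0 < ε / 2 := half_pos hε
  have hsmall : ∀ᶠ r in 𝓝[>] (0 : ℝ), r < ε / 2 := nhdsWithin_le_nhds (eventually_lt_nhds hρ)
  obtain ⟨r, hrρ, hrM, hrK, hr⟩ := (hsmall.and ((eventually_nhdsGT_zero_mul_lt (a := M) hρ).and
    ((eventually_nhdsGT_zero_mul_lt (a := K) one_pos).and self_mem_nhdsWithin))).exists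
  refine ⟨r, hr, mem_of_superset (ball_mem_nhds _ hρ) fun p hp => ?_⟩
  rw [← ball_prod_same] at hp
  have hx : ball p.2 r ⊆ ball c ε := ball_subset_ball' (by linarith [mem_ball.mp hp.2])
  have hw : closedBall p.1 (ε / 2) ⊆ ball w₀ ε :=
    closedBall_subset_ball' (by linarith [mem_ball.mp hp.1])
  exact IsPicardDisc.exists_hasDerivAt
    { differentiableAt := fun x hx' w hw' => ((hbox x (hx hx')).1 w (hw hw')).1
      norm_le := fun x hx' w hw' => ((hbox x (hx hx')).1 w (hw hw')).2
      lipschitzOnWith := fun x hx' => (hbox x (hx hx')).2.mono hw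
      nonneg := hρ.le
      mul_bound_le := hrM.le
      mul_lipschitz_lt := hrK } hr

theorem eqOn_comp_of_mapsTo {G : E → ℂ → E} {s : Set ℂ} {γ : ℝ → ℂ} {a b : ℝ}
    {W₁ W₂ : ℂ → E} (hs : IsOpen s) (hγ : ContinuousOn γ (Ico a b)) (hγs : MapsTo γ (Ico a b) s)
    (hG : ∀ᶠ p in 𝓝 (W₁ (γ a), γ a), DifferentiableAt ℂ (fun p : E × ℂ => G p.1 p.2) p)
    (h₁ : ∀ x ∈ s, HasDerivAt W₁ (G (W₁ x) x) x) (h₂ : ∀ x ∈ s, HasDerivAt W₂ (G (W₂ x) x) x)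
    (ha : W₁ (γ a) = W₂ (γ a)) : EqOn (W₁ ∘ γ) (W₂ ∘ γ) (Ico a b) := by
  intro t ht
  have han (W : ℂ → E) (hW : ∀ x ∈ s, HasDerivAt W (G (W x) x) x) :
      AnalyticOnNhd ℂ W (γ '' Ico a b) :=
    (DifferentiableOn.analyticOnNhd
      (fun x hx => (hW x hx).differentiableAt.differentiableWithinAt) hs).mono hγs.image_subset
  have hγa : γ a ∈ γ '' Ico a b := mem_image_of_mem γ (left_mem_Ico.mpr (ht.1.trans_lt ht.2))
  have hs_nhds : s ∈ 𝓝 (γ a) := hs.mem_nhds (hγs.image_subset hγa)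
  exact (han W₁ h₁).eqOn_of_preconnected_of_eventuallyEq (han W₂ h₂)
    (isPreconnected_Ico.image γ hγ) hγa
    (eventuallyEq_of_eventually_differentiableAt hG (eventually_of_mem hs_nhds h₁)
      (eventually_of_mem hs_nhds h₂) ha) (mem_image_of_mem γ ht)

end ComplexODE

end

theorem stmt_7_general {N : ℕ} (𝒱 : Set ℂ) (h𝒱 : IsOpen 𝒱)
    (U : ℂ → Fin N → ℂ)
    (G : (Fin N → ℂ) → ℂ → Fin N → ℂ)
    (hode : ∀ z ∈ 𝒱, HasDerivAt U (G (U z) z) z)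
    (z0 : ℂ)
    (γ : ℝ → ℂ)
    (hγan : ∀ t ∈ Icc (0 : ℝ) 1, AnalyticAt ℝ γ t)
    (hγ1 : γ 1 = z0)
    (hγin : ∀ t ∈ Ico (0 : ℝ) 1, γ t ∈ 𝒱)
    (ts : ℕ → ℝ) (hts : ∀ h, ts h ∈ Ico (0 : ℝ) 1)
    (htends : Filter.Tendsto ts Filter.atTop (nhds 1))
    (U0 : Fin N → ℂ)
    (hU0 : Filter.Tendsto (fun h => U (γ (ts h))) Filter.atTop (nhds U0))
    (hG0 : ∃ O' ∈ nhds ((U0, z0) : (Fin N → ℂ) × ℂ),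
      DifferentiableOn ℂ (fun p : (Fin N → ℂ) × ℂ => G p.1 p.2) O') :
    ∃ r > (0 : ℝ), ∃ W : ℂ → Fin N → ℂ,
      W z0 = U0 ∧
      (∀ z ∈ Metric.ball z0 r, HasDerivAt W (G (W z) z) z) ∧
      (∀ᶠ t in nhdsWithin 1 (Iio (1 : ℝ)), W (γ t) = U (γ t)) := by
  obtain ⟨O', hO', hGO'⟩ := hG0
  have hGd : ∀ᶠ p in 𝓝 (U0, z0), DifferentiableAt ℂ (fun p : (Fin N → ℂ) × ℂ => G p.1 p.2) p :=
    (eventually_eventually_nhds.mpr hO').mono fun p hp => hGO'.differentiableAt hp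
  obtain ⟨r, hr, hexists⟩ := ComplexODE.eventually_exists_hasDerivAt_ball hGd
  have hγz0 : Tendsto γ (𝓝 1) (𝓝 z0) :=
    hγ1 ▸ (hγan 1 ⟨zero_le_one, le_rfl⟩).continuousAt.tendsto
  obtain ⟨δ, hδ, hγδ⟩ :=
    Metric.eventually_nhds_iff.mp (hγz0.eventually (ball_mem_nhds z0 (half_pos hr)))
  have hpts : Tendsto (fun k => (U (γ (ts k)), γ (ts k))) atTop (𝓝 (U0, z0)) :=
    hU0.prodMk_nhds (hγz0.comp htends)
  obtain ⟨k, ⟨W, hWk, hW⟩, hGdk, hk⟩ := ((hpts.eventually hexists).and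
    ((hpts.eventually hGd.eventually_nhds).and (htends.eventually (ball_mem_nhds 1 hδ)))).exists
  set t₀ := ts k
  have hsub : ball z0 (r / 2) ⊆ ball (γ t₀) r :=
    ball_subset_ball' (by linarith [dist_comm (γ t₀) z0 ▸ mem_ball.mp (hγδ hk)])
  have hIco : Ico t₀ 1 ⊆ Ico 0 1 := Ico_subset_Ico_left (hts k).1
  have htail (t : ℝ) (ht : t ∈ Ico t₀ 1) : γ t ∈ ball z0 (r / 2) :=
    hγδ (by rw [Real.dist_eq, abs_sub_lt_iff] at hk ⊢; constructor <;> linarith [ht.1, ht.2])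
  have hWU : EqOn (W ∘ γ) (U ∘ γ) (Ico t₀ 1) :=
    ComplexODE.eqOn_comp_of_mapsTo (isOpen_ball.inter h𝒱)
      (fun t ht => (hγan t (Ico_subset_Icc_self (hIco ht))).continuousAt.continuousWithinAt)
      (fun t ht => ⟨hsub (htail t ht), hγin t (hIco ht)⟩) (hWk ▸ hGdk)
      (fun x hx => hW x hx.1) (fun x hx => hode x hx.2) hWk
  have hev : ∀ᶠ t in 𝓝[<] 1, W (γ t) = U (γ t) :=
    mem_of_superset (Ioo_mem_nhdsLT (hts k).2) fun t ht => hWU ⟨ht.1.le, ht.2⟩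
  refine ⟨r / 2, half_pos hr, W, ?_, fun z hz => hW z (hsub hz), hev⟩
  have hts' : Tendsto ts atTop (𝓝[<] 1) :=
    tendsto_nhdsWithin_iff.mpr ⟨htends, Eventually.of_forall fun j => (hts j).2⟩
  exact tendsto_nhds_unique
    ((hW z0 (hsub (mem_ball_self (half_pos hr)))).continuousAt.tendsto.comp (hγz0.comp htends)
      |>.congr' (hts'.eventually hev)) hU0

/-- **Continuation of holomorphic solutions along a curve reaching the boundary
(Corollary `complseq`).**  `ℂ^N` (modelled as `Fin N → ℂ`) carries the maximum coordinate
norm.  Let `U` be holomorphic on an open set `𝒱 ⊆ ℂ`, a solution of `U' = G (U z) z`,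
where `G` is holomorphic on an open neighbourhood `O` of the graph of `U`, uniformly
Lipschitz-like at every point of `O`.  Let `z0` be a boundary point of `𝒱`, `γ` an
injective real-analytic regular curve in `𝒱 ∪ {z0}` with endpoint `z0`, and suppose
`U (γ t_h) → U0` along a strictly increasing sequence `t_h → 1`, with `G` holomorphic at
`(U0, z0)`.  Then `U` continues analytically up to `z0`: some holomorphic solution `W` on
a disc around `z0` takes the value `U0` at `z0` and agrees with `U` along `γ` near `1`. -/
theorem stmt_7 {N : ℕ} (𝒱 : Set ℂ) (h𝒱 : IsOpen 𝒱)
    (U : ℂ → Fin N → ℂ) (hU : DifferentiableOn ℂ U 𝒱)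
    (O : Set ((Fin N → ℂ) × ℂ)) (hO : IsOpen O)
    (hgraph : ∀ z ∈ 𝒱, ((U z, z) : (Fin N → ℂ) × ℂ) ∈ O)
    (G : (Fin N → ℂ) → ℂ → Fin N → ℂ)
    (hG : DifferentiableOn ℂ (fun p => G p.1 p.2) O)
    (hlip : ∀ p ∈ O, ∃ K : ℝ, ∃ W ∈ nhds p,
      ∀ (A B : Fin N → ℂ) (z : ℂ), ((A, z) : (Fin N → ℂ) × ℂ) ∈ W →
        ((B, z) : (Fin N → ℂ) × ℂ) ∈ W → ‖G A z - G B z‖ ≤ K * ‖A - B‖)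
    (hode : ∀ z ∈ 𝒱, HasDerivAt U (G (U z) z) z)
    (z0 : ℂ) (hz0 : z0 ∈ frontier 𝒱)
    (γ : ℝ → ℂ)
    (hγan : ∀ t ∈ Icc (0 : ℝ) 1, AnalyticAt ℝ γ t)
    (hγreg : ∀ t ∈ Icc (0 : ℝ) 1, deriv γ t ≠ 0)
    (hγinj : InjOn γ (Icc (0 : ℝ) 1))
    (hγ1 : γ 1 = z0)
    (hγin : ∀ t ∈ Ico (0 : ℝ) 1, γ t ∈ 𝒱)
    (ts : ℕ → ℝ) (hmono : StrictMono ts) (hts : ∀ h, ts h ∈ Ico (0 : ℝ) 1)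
    (htends : Filter.Tendsto ts Filter.atTop (nhds 1))
    (U0 : Fin N → ℂ)
    (hU0 : Filter.Tendsto (fun h => U (γ (ts h))) Filter.atTop (nhds U0))
    (hG0 : ∃ O' ∈ nhds ((U0, z0) : (Fin N → ℂ) × ℂ),
      DifferentiableOn ℂ (fun p : (Fin N → ℂ) × ℂ => G p.1 p.2) O') :
    ∃ r > (0 : ℝ), ∃ W : ℂ → Fin N → ℂ,
      W z0 = U0 ∧
      (∀ z ∈ Metric.ball z0 r, HasDerivAt W (G (W z) z) z) ∧
      (∀ᶠ t in nhdsWithin 1 (Iio (1 : ℝ)), W (γ t) = U (γ t)) :=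
  stmt_7_general 𝒱 h𝒱 U G hode z0 γ hγan hγ1 hγin ts hts htends U0 hU0 hG0
end

section
/- Let N ≥ 2, let Ω_1, …, Ω_N ⊆ ℂ be open, let b_1, a_2, …, a_N be holomorphic on Ω_1 and f_k holomorphic on Ω_k (2 ≤ k ≤ N). Let V ⊆ ℂ be a connected open set, z0 ∈ V, and let u^1, …, u^N : V → ℂ be holomorphic with u^i(V) ⊆ Ω_i for each i, such that b_1∘u^1, a_k∘u^1 (2 ≤ k ≤ N) and f_k∘u^k (2 ≤ k ≤ N) are nowhere vanishing on V. Suppose the geodesic system holds on V: ü^1 + (b_1′(u^1)/(2 b_1(u^1)))(u̇^1)² − Σ_{l=2}^N (a_l′(u^1) f_l(u^l)/(2 b_1(u^1)))(u̇^l)² = 0, and ü^k + (f_k′(u^k)/(2 f_k(u^k)))(u̇^k)² + (a_k′(u^1)/a_k(u^1)) u̇^1 u̇^k = 0 for k = 2,…,N. Assume moreover that u^1 is not constant on V. Then there exist complex constants A_1, …, A_N, with A_k = (u̇^k(z0))² f_k(u^k(z0)) a_k(u^1(z0))² for 2 ≤ k ≤ N, such that for all z ∈ V: (u̇^1(z))²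 b_1(u^1(z)) = A_1 − Σ_{l=2}^N A_l / a_l(u^1(z)), and (u̇^k(z))² f_k(u^k(z)) a_k(u^1(z))² = A_k for k = 2,…,N. -/
/-! Along a geodesic of the warped product, each fibre coordinate `u^k` carries a conserved
momentum `(u̇^k)² f_k(u^k) a_k(u¹)²`: differentiating it gives `2 f_k a_k² u̇^k` times the
`k`-th geodesic equation (cleared of denominators). Once these momenta are known to be
constants `A_k`, the derivative of `(u̇¹)² b₁(u¹) + Σ_k A_k / a_k(u¹)` is `2 b₁ u̇¹` times the
first geodesic equation, because `A_k a_k'(u¹) / a_k(u¹)² = a_k'(u¹) f_k(u^k) (u̇^k)²`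
turns the sum into the coupling term of that equation. A function with vanishing derivative
on a connected open set is constant. -/

section

variable {𝕜 : Type*} [NontriviallyNormedField 𝕜]

theorem hasDerivAt_sum_div_comp {ι : Type*} (s : Finset ι) (A : ι → 𝕜) {v : 𝕜 → 𝕜}
    {α : ι → 𝕜 → 𝕜} {z : 𝕜} (hv : DifferentiableAt 𝕜 v z)
    (hα : ∀ l ∈ s, DifferentiableAt 𝕜 (α l) (v z)) (hαz : ∀ l ∈ s, α l (v z) ≠ 0) :
    HasDerivAt (fun z ↦ ∑ l ∈ s, A l / α l (v z))
      (-(∑ l ∈ s, A l * deriv (α l) (v z) / α l (v z) ^ 2) * deriv v z) z := by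
  rw [neg_mul, Finset.sum_mul, ← Finset.sum_neg_distrib]
  refine HasDerivAt.fun_sum fun l hl ↦ ?_
  refine ((hasDerivAt_const z (A l)).fun_div ((hα l hl).hasDerivAt.comp z hv.hasDerivAt)
    (hαz l hl)).congr_deriv ?_
  simp only [Function.comp_apply]
  ring

theorem hasDerivAt_sq_deriv_mul_comp_mul_sq_of_geodesic [CharZero 𝕜] {v w F α : 𝕜 → 𝕜}
    {z : 𝕜} (hv : DifferentiableAt 𝕜 v z) (hw : DifferentiableAt 𝕜 w z)
    (hw' : DifferentiableAt 𝕜 (deriv w) z)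
    (hF : DifferentiableAt 𝕜 F (w z)) (hα : DifferentiableAt 𝕜 α (v z))
    (hFz : F (w z) ≠ 0) (hαz : α (v z) ≠ 0)
    (hgeo : deriv (deriv w) z + deriv F (w z) / (2 * F (w z)) * deriv w z ^ 2
      + deriv α (v z) / α (v z) * deriv v z * deriv w z = 0) :
    HasDerivAt (fun z ↦ deriv w z ^ 2 * F (w z) * α (v z) ^ 2) 0 z := by
  have hderiv := ((hw'.hasDerivAt.fun_pow 2).fun_mul (hF.hasDerivAt.comp z hw.hasDerivAt)).fun_mul
    ((hα.hasDerivAt.comp z hv.hasDerivAt).fun_pow 2)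
  refine hderiv.congr_deriv ?_
  field_simp at hgeo
  simp only [Function.comp_apply]
  push_cast
  linear_combination (α (v z) * deriv w z) * hgeo

theorem hasDerivAt_energy_of_geodesic [CharZero 𝕜] {ι : Type*} (s : Finset ι) (A : ι → 𝕜)
    {v B : 𝕜 → 𝕜} {w F α : ι → 𝕜 → 𝕜} {z : 𝕜}
    (hv : DifferentiableAt 𝕜 v z) (hv' : DifferentiableAt 𝕜 (deriv v) z)
    (hB : DifferentiableAt 𝕜 B (v z)) (hα : ∀ l ∈ s, DifferentiableAt 𝕜 (α l) (v z))
    (hBz : B (v z) ≠ 0) (hαz : ∀ l ∈ s, α l (v z) ≠ 0)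
    (hA : ∀ l ∈ s, A l = deriv (w l) z ^ 2 * F l (w l z) * α l (v z) ^ 2)
    (hgeo : deriv (deriv v) z + deriv B (v z) / (2 * B (v z)) * deriv v z ^ 2
      - ∑ l ∈ s, deriv (α l) (v z) * F l (w l z) / (2 * B (v z)) * deriv (w l) z ^ 2 = 0) :
    HasDerivAt (fun z ↦ deriv v z ^ 2 * B (v z) + ∑ l ∈ s, A l / α l (v z)) 0 z := by
  set S := ∑ l ∈ s, deriv (α l) (v z) * F l (w l z) * deriv (w l) z ^ 2
  have hsum : ∑ l ∈ s, A l * deriv (α l) (v z) / α l (v z) ^ 2 = S :=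
    Finset.sum_congr rfl fun l hl ↦ by
      rw [hA l hl]
      field_simp [hαz l hl]
  have hgeo' : deriv (deriv v) z + deriv B (v z) / (2 * B (v z)) * deriv v z ^ 2
      - S / (2 * B (v z)) = 0 := by
    rw [← hgeo, Finset.sum_div]
    congr 1
    exact Finset.sum_congr rfl fun l _ ↦ by ring
  have hderiv := ((hv'.hasDerivAt.fun_pow 2).fun_mul (hB.hasDerivAt.comp z hv.hasDerivAt)).fun_add
    (hasDerivAt_sum_div_comp s A hv hα hαz)
  refine hderiv.congr_deriv ?_
  rw [hsum]
  field_simp at hgeo'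
  simp only [Function.comp_apply]
  push_cast
  linear_combination deriv v z * hgeo'

end

theorem IsOpen.eq_of_hasDerivAt_zero {𝕜 : Type*} [RCLike 𝕜] {s : Set 𝕜} {g : 𝕜 → 𝕜}
    (hs : IsOpen s) (hs' : IsPreconnected s) (hg : ∀ z ∈ s, HasDerivAt g 0 z)
    {x y : 𝕜} (hx : x ∈ s) (hy : y ∈ s) : g x = g y :=
  hs.is_const_of_deriv_eq_zero hs' (fun z hz ↦ (hg z hz).differentiableAt.differentiableWithinAt)
    (fun z hz ↦ (hg z hz).deriv) hx hy

theorem stmt_9_general {N : ℕ} [NeZero N]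
    (Ω : Fin N → Set ℂ) (hΩ : ∀ i, IsOpen (Ω i))
    (b1 : ℂ → ℂ) (a f : Fin N → ℂ → ℂ)
    (hb1 : DifferentiableOn ℂ b1 (Ω 0))
    (ha : ∀ k, k ≠ 0 → DifferentiableOn ℂ (a k) (Ω 0))
    (hf : ∀ k, k ≠ 0 → DifferentiableOn ℂ (f k) (Ω k))
    (V : Set ℂ) (hV : IsOpen V) (hVconn : IsConnected V)
    (z0 : ℂ) (hz0 : z0 ∈ V)
    (u : Fin N → ℂ → ℂ) (hu : ∀ i, DifferentiableOn ℂ (u i) V)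
    (humem : ∀ i, ∀ z ∈ V, u i z ∈ Ω i)
    (hb1ne : ∀ z ∈ V, b1 (u 0 z) ≠ 0)
    (hane : ∀ k, k ≠ 0 → ∀ z ∈ V, a k (u 0 z) ≠ 0)
    (hfne : ∀ k, k ≠ 0 → ∀ z ∈ V, f k (u k z) ≠ 0)
    (hgeo0 : ∀ z ∈ V,
      deriv (deriv (u 0)) z
        + (deriv b1 (u 0 z) / (2 * b1 (u 0 z))) * (deriv (u 0) z) ^ 2
        - ∑ l ∈ Finset.univ.erase (0 : Fin N),
            (deriv (a l) (u 0 z) * f l (u l z) / (2 * b1 (u 0 z))) * (deriv (u l) z) ^ 2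
        = 0)
    (hgeok : ∀ k, k ≠ 0 → ∀ z ∈ V,
      deriv (deriv (u k)) z
        + (deriv (f k) (u k z) / (2 * f k (u k z))) * (deriv (u k) z) ^ 2
        + (deriv (a k) (u 0 z) / a k (u 0 z)) * deriv (u 0) z * deriv (u k) z = 0) :
    ∃ A : Fin N → ℂ,
      (∀ k, k ≠ 0 → A k = (deriv (u k) z0) ^ 2 * f k (u k z0) * (a k (u 0 z0)) ^ 2) ∧
      (∀ z ∈ V, (deriv (u 0) z) ^ 2 * b1 (u 0 z)
          = A 0 - ∑ l ∈ Finset.univ.erase (0 : Fin N), A l / a l (u 0 z)) ∧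
      (∀ k, k ≠ 0 → ∀ z ∈ V,
        (deriv (u k) z) ^ 2 * f k (u k z) * (a k (u 0 z)) ^ 2 = A k) := by
  have hVpre := hVconn.isPreconnected
  have hu₁ i z (hz : z ∈ V) : DifferentiableAt ℂ (u i) z :=
    (hu i).differentiableAt (hV.mem_nhds hz)
  have hu₂ i z (hz : z ∈ V) : DifferentiableAt ℂ (deriv (u i)) z :=
    ((hu i).deriv hV).differentiableAt (hV.mem_nhds hz)
  have ha' k (hk : k ≠ 0) z (hz : z ∈ V) : DifferentiableAt ℂ (a k) (u 0 z) :=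
    (ha k hk).differentiableAt ((hΩ 0).mem_nhds (humem 0 z hz))
  let M k z := deriv (u k) z ^ 2 * f k (u k z) * a k (u 0 z) ^ 2
  have hM : ∀ k ≠ 0, ∀ z ∈ V, M k z = M k z0 := fun k hk z hz ↦
    hV.eq_of_hasDerivAt_zero hVpre (fun z hz ↦
      hasDerivAt_sq_deriv_mul_comp_mul_sq_of_geodesic (hu₁ 0 z hz) (hu₁ k z hz) (hu₂ k z hz)
        ((hf k hk).differentiableAt ((hΩ k).mem_nhds (humem k z hz))) (ha' k hk z hz)
        (hfne k hk z hz) (hane k hk z hz) (hgeok k hk z hz)) hz hz0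
  let E z := deriv (u 0) z ^ 2 * b1 (u 0 z) +
    ∑ l ∈ Finset.univ.erase (0 : Fin N), M l z0 / a l (u 0 z)
  have hE : ∀ z ∈ V, E z = E z0 := fun z hz ↦
    hV.eq_of_hasDerivAt_zero hVpre (fun z hz ↦
      hasDerivAt_energy_of_geodesic _ _ (hu₁ 0 z hz) (hu₂ 0 z hz)
        (hb1.differentiableAt ((hΩ 0).mem_nhds (humem 0 z hz)))
        (fun l hl ↦ ha' l (Finset.ne_of_mem_erase hl) z hz) (hb1ne z hz)
        (fun l hl ↦ hane l (Finset.ne_of_mem_erase hl) z hz)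
        (fun l hl ↦ (hM l (Finset.ne_of_mem_erase hl) z hz).symm) (hgeo0 z hz)) hz hz0
  refine ⟨fun k ↦ if k = 0 then E z0 else M k z0, fun k hk ↦ if_neg hk, fun z hz ↦ ?_,
    fun k hk z hz ↦ (hM k hk z hz).trans (if_neg hk).symm⟩
  beta_reduce
  rw [if_pos rfl, ← hE z hz,
    Finset.sum_congr rfl fun l hl ↦ by rw [if_neg (Finset.ne_of_mem_erase hl)]]
  ring

/-- **First integrals of the geodesic equations of a warped product, nonconstant base
component (Lemma `integraleprimo1`).**  Coordinates are indexed by `Fin N`, index `0`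
playing the role of the index `1` of the paper.  If `u = (u⁰,…,u^{N-1})` is a holomorphic
solution on a connected open set `V` of the geodesic system of the warped product metric
`Λ = b₁(u⁰) du⁰⊙du⁰ + Σ_{k≠0} a_k(u⁰) f_k(u^k) du^k⊙du^k`, starting at a metrically
ordinary point (all the displayed denominators are nonvanishing along `u`), and `u⁰` is not
constant, then the displayed first integrals hold for suitable constants `A_k`. -/
theorem stmt_9 {N : ℕ} [NeZero N] (hN : 2 ≤ N)
    (Ω : Fin N → Set ℂ) (hΩ : ∀ i, IsOpen (Ω i))
    (b1 : ℂ → ℂ) (a f : Fin N → ℂ → ℂ)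
    (hb1 : DifferentiableOn ℂ b1 (Ω 0))
    (ha : ∀ k, k ≠ 0 → DifferentiableOn ℂ (a k) (Ω 0))
    (hf : ∀ k, k ≠ 0 → DifferentiableOn ℂ (f k) (Ω k))
    (V : Set ℂ) (hV : IsOpen V) (hVconn : IsConnected V)
    (z0 : ℂ) (hz0 : z0 ∈ V)
    (u : Fin N → ℂ → ℂ) (hu : ∀ i, DifferentiableOn ℂ (u i) V)
    (humem : ∀ i, ∀ z ∈ V, u i z ∈ Ω i)
    (hb1ne : ∀ z ∈ V, b1 (u 0 z) ≠ 0)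
    (hane : ∀ k, k ≠ 0 → ∀ z ∈ V, a k (u 0 z) ≠ 0)
    (hfne : ∀ k, k ≠ 0 → ∀ z ∈ V, f k (u k z) ≠ 0)
    (hgeo0 : ∀ z ∈ V,
      deriv (deriv (u 0)) z
        + (deriv b1 (u 0 z) / (2 * b1 (u 0 z))) * (deriv (u 0) z) ^ 2
        - ∑ l ∈ Finset.univ.erase (0 : Fin N),
            (deriv (a l) (u 0 z) * f l (u l z) / (2 * b1 (u 0 z))) * (deriv (u l) z) ^ 2
        = 0)
    (hgeok : ∀ k, k ≠ 0 → ∀ z ∈ V,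
      deriv (deriv (u k)) z
        + (deriv (f k) (u k z) / (2 * f k (u k z))) * (deriv (u k) z) ^ 2
        + (deriv (a k) (u 0 z) / a k (u 0 z)) * deriv (u 0) z * deriv (u k) z = 0)
    (hnc : ¬ ∃ c : ℂ, ∀ z ∈ V, u 0 z = c) :
    ∃ A : Fin N → ℂ,
      (∀ k, k ≠ 0 → A k = (deriv (u k) z0) ^ 2 * f k (u k z0) * (a k (u 0 z0)) ^ 2) ∧
      (∀ z ∈ V, (deriv (u 0) z) ^ 2 * b1 (u 0 z)
          = A 0 - ∑ l ∈ Finset.univ.erase (0 : Fin N), A l / a l (u 0 z)) ∧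
      (∀ k, k ≠ 0 → ∀ z ∈ V,
        (deriv (u k) z) ^ 2 * f k (u k z) * (a k (u 0 z)) ^ 2 = A k) :=
  stmt_9_general Ω hΩ b1 a f hb1 ha hf V hV hVconn z0 hz0 u hu humem hb1ne hane hfne hgeo0 hgeok
end

section
/- Let M and N be connected complex manifolds, G : M → N a holomorphic map, U ⊆ ℂ a nonempty connected open set and f : U → M holomorphic. Let (R̃, π_R, j_R, F_R) be a standard Riemann surface (a maximal standard analytical continuation) of the element (U, f) with values in M, and let (S̃, π_S, j_S, F_S) be a standard Riemann surface of the element (U, G∘f) with values in N. Then there exists a holomorphic map h : R̃ → S̃ such that h∘j_R = j_S and π_S∘h = π_R. -/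
open scoped Manifold
open Set Filter Topology

/-- A standard analytical continuation of the holomorphic mapping element `(U, f)`. -/
structure StandardContinuation (E : Type) [NormedAddCommGroup E] [NormedSpace ℂ E]
    (M : Type) [TopologicalSpace M] [ChartedSpace E M]
    (U : Set ℂ) (f : ℂ → M) where
  S : Type
  [topS : TopologicalSpace S]
  [chartedS : ChartedSpace ℂ S]
  [analyticS : IsManifold 𝓘(ℂ, ℂ) ⊤ S]
  [t2S : T2Space S]
  [secondCountableS : SecondCountableTopology S]
  [connectedS : ConnectedSpace S]
  p : S → ℂ
  hp : MDifferentiable 𝓘(ℂ, ℂ) 𝓘(ℂ, ℂ) p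
  hpnc : ¬ ∃ c : ℂ, ∀ s, p s = c
  hUrange : U ⊆ Set.range p
  j : ℂ → S
  hj : MDifferentiableOn 𝓘(ℂ, ℂ) 𝓘(ℂ, ℂ) j U
  hpj : ∀ z ∈ U, p (j z) = z
  F : S → M
  hF : MDifferentiable 𝓘(ℂ, ℂ) 𝓘(ℂ, E) F
  hFj : ∀ z ∈ U, F (j z) = f z

attribute [instance] StandardContinuation.topS StandardContinuation.chartedS
  StandardContinuation.analyticS StandardContinuation.t2S
  StandardContinuation.secondCountableS StandardContinuation.connectedS

/-- A standard analytical continuation is a *standard Riemann surface* (is maximal) if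
every standard analytical continuation of the same element admits a holomorphic morphism
into it. -/
def StandardContinuation.IsMaximal {E : Type} [NormedAddCommGroup E] [NormedSpace ℂ E]
    {M : Type} [TopologicalSpace M] [ChartedSpace E M]
    {U : Set ℂ} {f : ℂ → M} (Q : StandardContinuation E M U f) : Prop :=
  ∀ Q' : StandardContinuation E M U f,
    ∃ h : Q'.S → Q.S,
      MDifferentiable 𝓘(ℂ, ℂ) 𝓘(ℂ, ℂ) h ∧ ∀ z ∈ U, h (Q'.j z) = Q.j z

/-!
Composing the continuation `R` with `G` turns it into a continuation of `(U, G ∘ f)`, so the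
maximality of `S` yields a holomorphic `h` with `h ∘ R.j = S.j` on `U`. The holomorphic functions
`S.p ∘ h` and `R.p` on the connected surface `R.S` then agree on `R.j '' U`, which accumulates at
each of its points because `R.j` is injective and continuous on the open set `U`; by the identity
theorem they agree everywhere.
-/

section IdentityTheorem

variable {S : Type} [TopologicalSpace S] [ChartedSpace ℂ S] [IsManifold 𝓘(ℂ, ℂ) 1 S]
  {F : Type} [NormedAddCommGroup F] [NormedSpace ℂ F] [CompleteSpace F]
  {g₁ g₂ : S → F}

theorem MDifferentiable.eventuallyEq_of_frequently_eq (hg₁ : MDifferentiable 𝓘(ℂ, ℂ) 𝓘(ℂ, F) g₁)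
    (hg₂ : MDifferentiable 𝓘(ℂ, ℂ) 𝓘(ℂ, F) g₂) {s : S}
    (hfreq : ∃ᶠ t in 𝓝[≠] s, g₁ t = g₂ t) : g₁ =ᶠ[𝓝 s] g₂ := by
  set e := chartAt ℂ s
  have hs : s ∈ e.source := mem_chart_source ℂ s
  have hanalytic {g : S → F} (hg : MDifferentiable 𝓘(ℂ, ℂ) 𝓘(ℂ, F) g) :
      AnalyticAt ℂ (g ∘ e.symm) (e s) :=
    (mdifferentiableOn_iff_differentiableOn.1 <| hg.mdifferentiableOn.comp
        (mdifferentiableOn_atlas_symm (I := 𝓘(ℂ, ℂ)) (chart_mem_atlas ℂ s))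
        subset_preimage_univ).analyticAt (e.open_target.mem_nhds (e.map_source hs))
  have htendsto : Tendsto e (𝓝[≠] s) (𝓝[≠] (e s)) :=
    tendsto_nhdsWithin_iff.2
      ⟨(e.continuousAt hs).tendsto.mono_left nhdsWithin_le_nhds, e.eventually_ne_nhdsWithin hs⟩
  have hfreq_chart : ∃ᶠ w in 𝓝[≠] (e s), (g₁ ∘ e.symm) w = (g₂ ∘ e.symm) w :=
    htendsto.frequently <| hfreq.mp <|
      (eventually_nhdsWithin_of_eventually_nhds (e.eventually_left_inverse hs)).mono
        fun t ht heq => by simpa only [Function.comp_apply, ht] using heq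
  exact (e.eventually_nhds' (fun t => g₁ t = g₂ t) hs).1 <|
    ((hanalytic hg₁).frequently_eq_iff_eventually_eq (hanalytic hg₂)).1 hfreq_chart

theorem MDifferentiable.eq_of_frequently_eq [PreconnectedSpace S]
    (hg₁ : MDifferentiable 𝓘(ℂ, ℂ) 𝓘(ℂ, F) g₁) (hg₂ : MDifferentiable 𝓘(ℂ, ℂ) 𝓘(ℂ, F) g₂)
    {s₀ : S} (hfreq : ∃ᶠ t in 𝓝[≠] s₀, g₁ t = g₂ t) : g₁ = g₂ := by
  set Z := {s | g₁ =ᶠ[𝓝 s] g₂}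
  have hZ_closed : IsClosed Z := by
    refine isClosed_iff_frequently.2 fun s hs => ?_
    rw [← nhdsNE_sup_pure, frequently_sup, frequently_pure] at hs
    rcases hs with hs_ne | hs_mem
    · exact hg₁.eventuallyEq_of_frequently_eq hg₂ (hs_ne.mono fun _ ht => ht.self_of_nhds)
    · exact hs_mem
  have hZ_univ : Z = univ :=
    IsClopen.eq_univ ⟨hZ_closed, isOpen_setOfPred_eventually_nhds⟩
      ⟨s₀, hg₁.eventuallyEq_of_frequently_eq hg₂ hfreq⟩
  exact funext fun s => (hZ_univ ▸ mem_univ s : s ∈ Z).self_of_nhds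

end IdentityTheorem

namespace StandardContinuation

variable {E E' : Type} [NormedAddCommGroup E] [NormedSpace ℂ E]
  [NormedAddCommGroup E'] [NormedSpace ℂ E']
  {M : Type} [TopologicalSpace M] [ChartedSpace E M]
  {N : Type} [TopologicalSpace N] [ChartedSpace E' N]
  {U : Set ℂ} {f : ℂ → M}

def map (Q : StandardContinuation E M U f) (G : M → N)
    (hG : MDifferentiable 𝓘(ℂ, E) 𝓘(ℂ, E') G) :
    StandardContinuation E' N U (fun z => G (f z)) where
  S := Q.S
  p := Q.p
  hp := Q.hp
  hpnc := Q.hpnc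
  hUrange := Q.hUrange
  j := Q.j
  hj := Q.hj
  hpj := Q.hpj
  F := G ∘ Q.F
  hF := hG.comp Q.hF
  hFj z hz := congrArg G (Q.hFj z hz)

theorem tendsto_j_nhdsNE (Q : StandardContinuation E M U f) (hU : IsOpen U) {z₀ : ℂ}
    (hz₀ : z₀ ∈ U) : Tendsto Q.j (𝓝[≠] z₀) (𝓝[≠] (Q.j z₀)) := by
  refine tendsto_nhdsWithin_iff.2 ⟨?_, ?_⟩
  · exact (Q.hj.continuousOn.continuousAt (hU.mem_nhds hz₀)).tendsto.mono_left
      nhdsWithin_le_nhds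
  · filter_upwards [mem_nhdsWithin_of_mem_nhds (hU.mem_nhds hz₀), self_mem_nhdsWithin]
      with z hz hne heq
    have hp_eq : Q.p (Q.j z) = Q.p (Q.j z₀) := congrArg Q.p heq
    exact hne (by rwa [Q.hpj z hz, Q.hpj z₀ hz₀] at hp_eq)

theorem p_comp_eq_of_j_eq {f' : ℂ → N} {Q : StandardContinuation E M U f}
    {Q' : StandardContinuation E' N U f'} (hU : IsOpen U) (hUne : U.Nonempty) {h : Q.S → Q'.S}
    (hh : MDifferentiable 𝓘(ℂ, ℂ) 𝓘(ℂ, ℂ) h) (hj : ∀ z ∈ U, h (Q.j z) = Q'.j z) :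
    Q'.p ∘ h = Q.p := by
  obtain ⟨z₀, hz₀⟩ := hUne
  refine (Q'.hp.comp hh).eq_of_frequently_eq Q.hp (s₀ := Q.j z₀) ?_
  refine (Q.tendsto_j_nhdsNE hU hz₀).frequently (Eventually.frequently ?_)
  filter_upwards [mem_nhdsWithin_of_mem_nhds (hU.mem_nhds hz₀)] with z hz
  rw [Function.comp_apply, hj z hz, Q'.hpj z hz, Q.hpj z hz]

end StandardContinuation

theorem stmt_16_general {E E' : Type} [NormedAddCommGroup E] [NormedSpace ℂ E]
    [NormedAddCommGroup E'] [NormedSpace ℂ E']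
    (M : Type) [TopologicalSpace M] [ChartedSpace E M]
    (N : Type) [TopologicalSpace N] [ChartedSpace E' N]
    (G : M → N) (hG : MDifferentiable 𝓘(ℂ, E) 𝓘(ℂ, E') G)
    (U : Set ℂ) (hU : IsOpen U) (hUne : U.Nonempty)
    (f : ℂ → M)
    (R : StandardContinuation E M U f)
    (S : StandardContinuation E' N U (fun z => G (f z))) (hS : S.IsMaximal) :
    ∃ h : R.S → S.S,
      MDifferentiable 𝓘(ℂ, ℂ) 𝓘(ℂ, ℂ) h ∧
      (∀ z ∈ U, h (R.j z) = S.j z) ∧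
      (∀ s, S.p (h s) = R.p s) := by
  obtain ⟨h, hh, hj⟩ := hS (R.map G hG)
  exact ⟨h, hh, hj, congrFun (StandardContinuation.p_comp_eq_of_j_eq hU hUne hh hj)⟩

/-- **Pushing forward a standard Riemann surface along a holomorphic map of the target
(Lemma `passage`).**  Let `G : M → N` be holomorphic, let `R` be a standard Riemann
surface (maximal standard analytical continuation) of the element `(U, f)` with values in
`M`, and `S` a standard Riemann surface of `(U, G ∘ f)` with values in `N`.  Then there is
a holomorphic map `h : R.S → S.S` with `h ∘ R.j = S.j` on `U` and `S.p ∘ h = R.p`. -/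
theorem stmt_16 {E E' : Type} [NormedAddCommGroup E] [NormedSpace ℂ E] [CompleteSpace E]
    [NormedAddCommGroup E'] [NormedSpace ℂ E'] [CompleteSpace E']
    (M : Type) [TopologicalSpace M] [ChartedSpace E M]
    [IsManifold 𝓘(ℂ, E) ⊤ M] [ConnectedSpace M]
    (N : Type) [TopologicalSpace N] [ChartedSpace E' N]
    [IsManifold 𝓘(ℂ, E') ⊤ N] [ConnectedSpace N]
    (G : M → N) (hG : MDifferentiable 𝓘(ℂ, E) 𝓘(ℂ, E') G)
    (U : Set ℂ) (hU : IsOpen U) (hUne : U.Nonempty) (hUconn : IsConnected U)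
    (f : ℂ → M) (hf : MDifferentiableOn 𝓘(ℂ, ℂ) 𝓘(ℂ, E) f U)
    (R : StandardContinuation E M U f) (hR : R.IsMaximal)
    (S : StandardContinuation E' N U (fun z => G (f z))) (hS : S.IsMaximal) :
    ∃ h : R.S → S.S,
      MDifferentiable 𝓘(ℂ, ℂ) 𝓘(ℂ, ℂ) h ∧
      (∀ z ∈ U, h (R.j z) = S.j z) ∧
      (∀ s, S.p (h s) = R.p s) :=
  stmt_16_general M N G hG U hU hUne f R S hS
end
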